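/- arXiv:1511.07110 — 6 statements merged into one kernel-verified Lean document; each statement's English description precedes it below -/
import Mathlib

section
/- Fix d, m, n ∈ ℕ, constants C1, C3, C4 > 0, L > 0, and an L-Lipschitz function h : ℝ → ℝ. Let F = {x ↦ Σ_{j=1}^m α_j h(⟨w_j, x⟩) : α ∈ ℝ^m, ‖α‖₂ ≤ C4, w_j ∈ ℝ^d, ‖w_j‖₂ ≤ C3 for all j}. Then for any points x_1,…,x_n ∈ ℝ^d with ‖x_i‖₂ ≤ C1 for all i, the empirical Rademacher complexity satisfies R̂_n(F) ≤ 2 L C1 C3 C4 √m / √n + C4 |h(0)| √m / √n. -/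
open RealInnerProductSpace

/-- (One-sided) empirical Rademacher complexity
`R̂_n(F) = 2^{-n} Σ_{σ ∈ {−1,1}^n} sup_{f ∈ F} (1/n) Σ_i σ_i f (x i)`. -/
noncomputable def radEmp {α : Type*} {n : ℕ} (F : Set (α → ℝ)) (x : Fin n → α) : ℝ :=
  (2 ^ n : ℝ)⁻¹ * ∑ σ : Fin n → Bool,
    sSup {r : ℝ | ∃ f ∈ F, r = (n : ℝ)⁻¹ * ∑ i, (if σ i then (1 : ℝ) else -1) * f (x i)}

/-! For a fixed sign vector `σ`, Cauchy–Schwarz in the outer weights `α` bounds the supremum over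
the class by `C4 √m` times the largest `|Σᵢ σᵢ h ⟪w, xᵢ⟫|` over `‖w‖ ≤ C3`. Centering `h` at `0`
splits this into `|h 0| |Σᵢ σᵢ|` plus the Rademacher sum of the centered neurons, whose absolute
value is at most the sum of its one-sided suprema at `σ` and `-σ`. After averaging over `σ`, the
Ledoux–Talagrand contraction principle replaces the `L`-Lipschitz neurons by the linear ones
`w ↦ L ⟪w, xᵢ⟫`, whose supremum is `L C3 ‖Σᵢ σᵢ xᵢ‖`, and Jensen gives
`𝔼 ‖Σᵢ σᵢ vᵢ‖ ≤ (Σᵢ ‖vᵢ‖²)^{1/2}`. -/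

open Finset

noncomputable def boolSign (b : Bool) : ℝ := if b then 1 else -1

lemma boolSign_not (b : Bool) : boolSign (!b) = -boolSign b := by cases b <;> simp [boolSign]

lemma abs_boolSign (b : Bool) : |boolSign b| = 1 := by cases b <;> simp [boolSign]

lemma boolSign_mul_self (b : Bool) : boolSign b * boolSign b = 1 := by
  cases b <;> norm_num [boolSign]

section SignVectors

variable {n : ℕ}

lemma sum_comp_not {M : Type*} [AddCommMonoid M] (F : (Fin n → Bool) → M) :
    ∑ σ : Fin n → Bool, F (fun i => !σ i) = ∑ σ, F σ :=
  Equiv.sum_comp (Function.Involutive.toPerm (fun (σ : Fin n → Bool) i => !σ i)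
    fun σ => by simp) F

lemma sum_comp_update_not {M : Type*} [AddCommMonoid M] (a : Fin n)
    (F : (Fin n → Bool) → M) :
    ∑ σ : Fin n → Bool, F (Function.update σ a (!σ a)) = ∑ σ, F σ :=
  Equiv.sum_comp (Function.Involutive.toPerm
    (fun σ : Fin n → Bool => Function.update σ a (!σ a)) fun σ => by simp) F

lemma sum_boolSign_mul_boolSign (i k : Fin n) :
    ∑ σ : Fin n → Bool, boolSign (σ i) * boolSign (σ k) = if i = k then 2 ^ n else 0 := by
  split_ifs with hik
  · simp [hik, boolSign_mul_self]
  · -- flipping the sign at `i` negates every term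
    refine sum_involution (fun σ _ => Function.update σ i (!σ i)) ?_ ?_
      (fun _ _ => mem_univ _) (fun σ _ => by simp)
    · intro σ _
      simp [Function.update_of_ne (Ne.symm hik), boolSign_not]
    · intro σ _ _ h
      simpa using congrFun h i

lemma sum_norm_sq_sum_boolSign_smul {F : Type*} [NormedAddCommGroup F]
    [InnerProductSpace ℝ F] (v : Fin n → F) :
    ∑ σ : Fin n → Bool, ‖∑ i, boolSign (σ i) • v i‖ ^ 2 = 2 ^ n * ∑ i, ‖v i‖ ^ 2 := by
  have expand : ∀ σ : Fin n → Bool, ‖∑ i, boolSign (σ i) • v i‖ ^ 2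
      = ∑ i, ∑ k, boolSign (σ i) * boolSign (σ k) * ⟪v k, v i⟫ := by
    intro σ
    simp only [← real_inner_self_eq_norm_sq, sum_inner, inner_sum, real_inner_smul_left,
      real_inner_smul_right, mul_assoc]
  simp only [expand]
  rw [sum_comm]
  simp only [sum_comm (γ := Fin n → Bool), ← sum_mul, sum_boolSign_mul_boolSign, ite_mul,
    zero_mul, sum_ite_eq, mem_univ, if_true, real_inner_self_eq_norm_sq, mul_sum]

lemma sum_norm_sum_boolSign_smul_le {F : Type*} [NormedAddCommGroup F]
    [InnerProductSpace ℝ F] {v : Fin n → F} {C : ℝ} (hC : 0 ≤ C) (hv : ∀ i, ‖v i‖ ≤ C) :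
    ∑ σ : Fin n → Bool, ‖∑ i, boolSign (σ i) • v i‖ ≤ 2 ^ n * C * √n := by
  refine (pow_le_pow_iff_left₀ (sum_nonneg fun _ _ => norm_nonneg _) (by positivity)
    two_ne_zero).mp ?_
  calc (∑ σ : Fin n → Bool, ‖∑ i, boolSign (σ i) • v i‖) ^ 2
      ≤ 2 ^ n * ∑ σ : Fin n → Bool, ‖∑ i, boolSign (σ i) • v i‖ ^ 2 := by
        simpa using sq_sum_le_card_mul_sum_sq (s := univ)
          (f := fun σ : Fin n → Bool => ‖∑ i, boolSign (σ i) • v i‖)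
    _ ≤ 2 ^ n * (2 ^ n * ∑ _i : Fin n, C ^ 2) := by
        rw [sum_norm_sq_sum_boolSign_smul]
        gcongr with i
        exact hv i
    _ = (2 ^ n * C * √n) ^ 2 := by
        simp only [sum_const, card_univ, Fintype.card_fin, nsmul_eq_mul, mul_pow,
          Real.sq_sqrt (Nat.cast_nonneg n)]
        ring

end SignVectors

lemma sum_mul_le_norm_mul_sqrt_card_mul {m : ℕ} (α : EuclideanSpace ℝ (Fin m))
    {v : Fin m → ℝ} {B : ℝ} (hB : 0 ≤ B) (hv : ∀ j, |v j| ≤ B) :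
    ∑ j, α j * v j ≤ ‖α‖ * (√m * B) := by
  have hnorm : ‖WithLp.toLp 2 v‖ ≤ √m * B := by
    rw [EuclideanSpace.norm_eq, ← Real.sqrt_sq hB, ← Real.sqrt_mul (Nat.cast_nonneg m)]
    gcongr
    calc ∑ j, ‖v j‖ ^ 2 ≤ ∑ _j : Fin m, B ^ 2 := by
          gcongr with j
          simpa using hv j
      _ = m * B ^ 2 := by simp
  calc ∑ j, α j * v j = ⟪α, WithLp.toLp 2 v⟫ := by simp [PiLp.inner_apply, mul_comm]
    _ ≤ ‖α‖ * ‖WithLp.toLp 2 v‖ := real_inner_le_norm _ _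
    _ ≤ ‖α‖ * (√m * B) := by gcongr

lemma abs_le_sSup_image_add_sSup_image_neg {E : Type*} {K : Set E} {f : E → ℝ} {w₀ : E}
    (hw₀ : w₀ ∈ K) (hf₀ : f w₀ = 0) (hf : BddAbove (f '' K)) (hf' : BddAbove ((-f) '' K))
    {w : E} (hw : w ∈ K) : |f w| ≤ sSup (f '' K) + sSup ((-f) '' K) := by
  have h₀ : 0 ≤ sSup (f '' K) := hf₀ ▸ le_csSup hf ⟨w₀, hw₀, rfl⟩
  have h₀' : 0 ≤ sSup ((-f) '' K) := by
    simpa [hf₀] using le_csSup hf' ⟨w₀, hw₀, rfl⟩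
  have h₁ : f w ≤ sSup (f '' K) := le_csSup hf ⟨w, hw, rfl⟩
  have h₂ : -f w ≤ sSup ((-f) '' K) := le_csSup hf' ⟨w, hw, rfl⟩
  exact abs_le.mpr ⟨by linarith, by linarith⟩

section SignedSums

variable {E : Type*} {n : ℕ}

noncomputable def signedSum (ψ : Fin n → E → ℝ) (σ : Fin n → Bool) (w : E) : ℝ :=
  ∑ i, boolSign (σ i) * ψ i w

lemma signedSum_not (ψ : Fin n → E → ℝ) (σ : Fin n → Bool) :
    signedSum ψ (fun i => !σ i) = -signedSum ψ σ := by
  ext w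
  simp [signedSum, boolSign_not]

lemma bddAbove_signedSum_image {K : Set E} {ψ : Fin n → E → ℝ} {M : ℝ}
    (hψ : ∀ i, ∀ w ∈ K, |ψ i w| ≤ M) (σ : Fin n → Bool) :
    BddAbove (signedSum ψ σ '' K) := by
  refine ⟨n * M, ?_⟩
  rintro _ ⟨w, hw, rfl⟩
  calc signedSum ψ σ w ≤ ∑ i, |boolSign (σ i) * ψ i w| :=
        (le_abs_self _).trans (abs_sum_le_sum_abs _ _)
    _ ≤ ∑ _i : Fin n, M := by
        gcongr with i
        simpa [abs_mul, abs_boolSign] using hψ i w hw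
    _ = n * M := by simp

lemma abs_signedSum_le_sSup_add_sSup {K : Set E} {ψ : Fin n → E → ℝ}
    {c : Fin n → ℝ} {w₀ : E} (hw₀ : w₀ ∈ K) (hc : ∀ i, ψ i w₀ = c i)
    (hbdd : ∀ σ, BddAbove (signedSum (fun i w => ψ i w - c i) σ '' K))
    (σ : Fin n → Bool) {w : E} (hw : w ∈ K) :
    |signedSum ψ σ w| ≤ sSup (signedSum (fun i w => ψ i w - c i) σ '' K)
      + sSup (signedSum (fun i w => ψ i w - c i) (fun i => !σ i) '' K)
      + |∑ i, boolSign (σ i) * c i| := by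
  have hsplit : signedSum ψ σ w
      = signedSum (fun i w => ψ i w - c i) σ w + ∑ i, boolSign (σ i) * c i := by
    simp only [signedSum, ← sum_add_distrib, ← mul_add, sub_add_cancel]
  have hcentered := abs_le_sSup_image_add_sSup_image_neg hw₀ (by simp [signedSum, hc])
    (hbdd σ) (signedSum_not _ σ ▸ hbdd _) hw
  rw [← signedSum_not] at hcentered
  rw [hsplit]
  exact (abs_add_le _ _).trans (by gcongr)

lemma sum_boolSign_mul_sum_mul_le {m : ℕ} (ψ : Fin n → E → ℝ)
    (σ : Fin n → Bool) (α : EuclideanSpace ℝ (Fin m)) (w : Fin m → E) {B : ℝ} (hB : 0 ≤ B)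
    (hψ : ∀ j, |signedSum ψ σ (w j)| ≤ B) :
    ∑ i, boolSign (σ i) * ∑ j, α j * ψ i (w j) ≤ ‖α‖ * (√m * B) := by
  have hswap : ∑ i, boolSign (σ i) * ∑ j, α j * ψ i (w j)
      = ∑ j, α j * signedSum ψ σ (w j) := by
    simp only [signedSum, mul_sum]
    rw [sum_comm]
    exact sum_congr rfl fun j _ => sum_congr rfl fun i _ => by ring
  exact hswap ▸ sum_mul_le_norm_mul_sqrt_card_mul α hB hψ

lemma sSup_add_sSup_neg_le {K : Set E} (hK : K.Nonempty) {φ t R : E → ℝ}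
    (ht : BddAbove ((t + R) '' K)) (ht' : BddAbove ((-t + R) '' K))
    (hle : ∀ w ∈ K, ∀ w' ∈ K, |φ w - φ w'| ≤ |t w - t w'|) :
    sSup ((φ + R) '' K) + sSup ((-φ + R) '' K)
      ≤ sSup ((t + R) '' K) + sSup ((-t + R) '' K) := by
  set S := sSup ((t + R) '' K) + sSup ((-t + R) '' K)
  have hpair : ∀ w ∈ K, ∀ w' ∈ K, t w - t w' ≤ S - R w - R w' := by
    intro w hw w' hw'
    have h₁ : t w + R w ≤ _ := le_csSup ht ⟨w, hw, rfl⟩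
    have h₂ : -t w' + R w' ≤ _ := le_csSup ht' ⟨w', hw', rfl⟩
    linarith
  refine le_of_forall_pos_le_add fun ε hε => ?_
  obtain ⟨_, ⟨w, hw, rfl⟩, hw_lt⟩ :=
    exists_lt_of_lt_csSup (hK.image (φ + R)) (sub_lt_self _ (half_pos hε))
  obtain ⟨_, ⟨w', hw', rfl⟩, hw'_lt⟩ :=
    exists_lt_of_lt_csSup (hK.image (-φ + R)) (sub_lt_self _ (half_pos hε))
  change _ < φ w + R w at hw_lt
  change _ < -φ w' + R w' at hw'_lt
  have hφ : φ w - φ w' ≤ S - R w - R w' :=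
    (le_abs_self _).trans <| (hle w hw w' hw').trans <|
      abs_sub_le_iff.mpr ⟨hpair w hw w' hw', by linarith [hpair w' hw' w hw]⟩
  linarith

lemma sum_sSup_signedSum_update_le {K : Set E} (hK : K.Nonempty) {ψ : Fin n → E → ℝ}
    {a : Fin n} {φ t : E → ℝ} {M : ℝ} (hψ : ∀ i, ∀ w ∈ K, |ψ i w| ≤ M)
    (ht : ∀ w ∈ K, |t w| ≤ M) (hle : ∀ w ∈ K, ∀ w' ∈ K, |φ w - φ w'| ≤ |t w - t w'|) :
    ∑ σ, sSup (signedSum (Function.update ψ a φ) σ '' K)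
      ≤ ∑ σ, sSup (signedSum (Function.update ψ a t) σ '' K) := by
  set flip := fun σ : Fin n → Bool => Function.update σ a (!σ a)
  set R := fun (σ : Fin n → Bool) (w : E) => ∑ i ∈ univ.erase a, boolSign (σ i) * ψ i w
  have hR : ∀ σ, R (flip σ) = R σ := fun σ => by
    ext w
    refine sum_congr rfl fun i hi => ?_
    simp [flip, Function.update_of_ne (ne_of_mem_erase hi)]
  have hsplit : ∀ χ σ, signedSum (Function.update ψ a χ) σ = boolSign (σ a) • χ + R σ :=
    fun χ σ => by
      ext w
      rw [signedSum, ← add_sum_erase _ _ (mem_univ a)]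
      refine congrArg₂ _ (by simp) (sum_congr rfl fun i hi => ?_)
      simp [Function.update_of_ne (ne_of_mem_erase hi)]
  have hsplit_flip : ∀ χ σ,
      signedSum (Function.update ψ a χ) (flip σ) = -(boolSign (σ a) • χ) + R σ := by
    intro χ σ
    rw [hsplit, hR]
    simp [flip, boolSign_not]
  have hbdd : ∀ σ, BddAbove (signedSum (Function.update ψ a t) σ '' K) :=
    bddAbove_signedSum_image fun i w hw => by
      rcases eq_or_ne i a with rfl | hi
      · simpa using ht w hw
      · simpa [Function.update_of_ne hi] using hψ i w hw
  -- each sign vector is paired with the one differing from it at `a`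
  have hpair : ∀ σ, sSup (signedSum (Function.update ψ a φ) σ '' K)
        + sSup (signedSum (Function.update ψ a φ) (flip σ) '' K)
      ≤ sSup (signedSum (Function.update ψ a t) σ '' K)
        + sSup (signedSum (Function.update ψ a t) (flip σ) '' K) := fun σ => by
    have hbddσ := hbdd σ
    have hbdd_flip := hbdd (flip σ)
    rw [hsplit] at hbddσ
    rw [hsplit_flip] at hbdd_flip
    rw [hsplit_flip, hsplit_flip, hsplit, hsplit]
    refine sSup_add_sSup_neg_le hK hbddσ hbdd_flip fun w hw w' hw' => ?_
    simpa [← mul_sub, abs_mul, abs_boolSign] using hle w hw w' hw'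
  have hsum := sum_le_sum fun σ (_ : σ ∈ univ) => hpair σ
  rw [sum_add_distrib, sum_add_distrib,
    sum_comp_update_not a fun σ => sSup (signedSum (Function.update ψ a φ) σ '' K),
    sum_comp_update_not a fun σ => sSup (signedSum (Function.update ψ a t) σ '' K)] at hsum
  linarith

theorem sum_sSup_signedSum_le {K : Set E} (hK : K.Nonempty) {φ t : Fin n → E → ℝ} {M : ℝ}
    (hφ : ∀ i, ∀ w ∈ K, |φ i w| ≤ M) (ht : ∀ i, ∀ w ∈ K, |t i w| ≤ M)
    (hle : ∀ i, ∀ w ∈ K, ∀ w' ∈ K, |φ i w - φ i w'| ≤ |t i w - t i w'|) :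
    ∑ σ, sSup (signedSum φ σ '' K) ≤ ∑ σ, sSup (signedSum t σ '' K) := by
  classical
  -- replace the `φ i` by the `t i` one coordinate at a time
  suffices ∀ s : Finset (Fin n), ∑ σ, sSup (signedSum (s.piecewise φ t) σ '' K)
      ≤ ∑ σ, sSup (signedSum t σ '' K) by
    simpa using this univ
  intro s
  induction s using Finset.induction_on with
  | empty => simp
  | insert a s ha ih =>
    refine le_trans ?_ ih
    have hbound : ∀ i, ∀ w ∈ K, |s.piecewise φ t i w| ≤ M := fun i w hw => by
      by_cases hi : i ∈ s <;> simp [hi, hφ i w hw, ht i w hw]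
    conv_rhs => rw [← Function.update_eq_self a (s.piecewise φ t),
      piecewise_eq_of_notMem _ _ _ ha]
    rw [piecewise_insert]
    exact sum_sSup_signedSum_update_le hK hbound (ht a) (hle a)

end SignedSums

section LipschitzComposition

variable {F : Type*} [NormedAddCommGroup F] [InnerProductSpace ℝ F] {h : ℝ → ℝ} {L : NNReal}

lemma LipschitzWith.abs_sub_le_mul (hh : LipschitzWith L h) (a b : ℝ) :
    |h a - h b| ≤ L * |a - b| := by
  simpa [Real.dist_eq] using hh.dist_le_mul a b

lemma abs_real_inner_le_of_norm_le {w x : F} {a b : ℝ} (hw : ‖w‖ ≤ a) (hx : ‖x‖ ≤ b) :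
    |⟪w, x⟫| ≤ a * b :=
  (abs_real_inner_le_norm w x).trans (mul_le_mul hw hx (norm_nonneg _) ((norm_nonneg _).trans hw))

lemma abs_comp_inner_sub_le (hh : LipschitzWith L h) {w x : F} {C1 C3 : ℝ} (hw : ‖w‖ ≤ C3)
    (hx : ‖x‖ ≤ C1) : |h ⟪w, x⟫ - h 0| ≤ L * (C3 * C1) :=
  calc |h ⟪w, x⟫ - h 0| ≤ L * |⟪w, x⟫ - 0| := hh.abs_sub_le_mul _ _
    _ ≤ L * (C3 * C1) := by
        rw [sub_zero]
        exact mul_le_mul_of_nonneg_left (abs_real_inner_le_of_norm_le hw hx) L.2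

lemma signedSum_mul_inner {n : ℕ} (c : ℝ) (x : Fin n → F) (σ : Fin n → Bool) (w : F) :
    signedSum (fun i w => c * ⟪w, x i⟫) σ w = c * ⟪w, ∑ i, boolSign (σ i) • x i⟫ := by
  simp only [signedSum, inner_sum, real_inner_smul_right, mul_sum]
  exact sum_congr rfl fun i _ => by ring

lemma sSup_signedSum_mul_inner_le {n : ℕ} {c C : ℝ} (hc : 0 ≤ c) (hC : 0 ≤ C) (x : Fin n → F)
    (σ : Fin n → Bool) :
    sSup (signedSum (fun i w => c * ⟪w, x i⟫) σ '' Metric.closedBall 0 C)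
      ≤ c * C * ‖∑ i, boolSign (σ i) • x i‖ := by
  refine csSup_le ((Metric.nonempty_closedBall.mpr hC).image _) ?_
  rintro _ ⟨w, hw, rfl⟩
  rw [signedSum_mul_inner, mul_assoc]
  gcongr
  exact (real_inner_le_norm _ _).trans
    (mul_le_mul_of_nonneg_right (mem_closedBall_zero_iff.mp hw) (norm_nonneg _))

lemma sum_sSup_signedSum_comp_inner_le (hh : LipschitzWith L h) {n : ℕ} {x : Fin n → F}
    {C1 C3 : ℝ} (hC1 : 0 ≤ C1) (hC3 : 0 ≤ C3) (hx : ∀ i, ‖x i‖ ≤ C1) :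
    ∑ σ, sSup (signedSum (fun i w => h ⟪w, x i⟫ - h 0) σ '' Metric.closedBall 0 C3)
      ≤ L * C3 * (2 ^ n * C1 * √n) := by
  calc ∑ σ, sSup (signedSum (fun i w => h ⟪w, x i⟫ - h 0) σ '' Metric.closedBall 0 C3)
      ≤ ∑ σ, sSup (signedSum (fun i w => L * ⟪w, x i⟫) σ '' Metric.closedBall 0 C3) := by
        refine sum_sSup_signedSum_le (Metric.nonempty_closedBall.mpr hC3) (M := L * (C3 * C1))
          (fun i w hw => abs_comp_inner_sub_le hh (mem_closedBall_zero_iff.mp hw) (hx i))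
          (fun i w hw => ?_) (fun i w _ w' _ => ?_)
        · rw [abs_mul, NNReal.abs_eq]
          gcongr
          exact abs_real_inner_le_of_norm_le (mem_closedBall_zero_iff.mp hw) (hx i)
        · simpa [← mul_sub, abs_mul] using hh.abs_sub_le_mul ⟪w, x i⟫ ⟪w', x i⟫
    _ ≤ ∑ σ : Fin n → Bool, L * C3 * ‖∑ i, boolSign (σ i) • x i‖ :=
        sum_le_sum fun σ _ => sSup_signedSum_mul_inner_le L.2 hC3 x σ
    _ ≤ L * C3 * (2 ^ n * C1 * √n) := by
        rw [← mul_sum]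
        gcongr
        exact sum_norm_sum_boolSign_smul_le hC1 hx

lemma abs_signedSum_comp_inner_le (hh : LipschitzWith L h) {n : ℕ} {x : Fin n → F}
    {C1 C3 : ℝ} (hx : ∀ i, ‖x i‖ ≤ C1) (σ : Fin n → Bool) {w : F} (hw : ‖w‖ ≤ C3) :
    |signedSum (fun i w => h ⟪w, x i⟫) σ w|
      ≤ sSup (signedSum (fun i w => h ⟪w, x i⟫ - h 0) σ '' Metric.closedBall 0 C3)
        + sSup (signedSum (fun i w => h ⟪w, x i⟫ - h 0) (fun i => !σ i) '' Metric.closedBall 0 C3)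
        + |h 0| * |∑ i, boolSign (σ i)| := by
  have hbdd := fun σ => bddAbove_signedSum_image (K := Metric.closedBall 0 C3) (fun i w hw =>
    abs_comp_inner_sub_le hh (mem_closedBall_zero_iff.mp hw) (hx i)) σ
  simpa [← sum_mul, abs_mul, mul_comm] using
    abs_signedSum_le_sSup_add_sSup (Metric.mem_closedBall_self ((norm_nonneg w).trans hw))
      (c := fun _ => h 0) (by simp) hbdd σ (mem_closedBall_zero_iff.mpr hw)

end LipschitzComposition

lemma radEmp_le {α : Type*} {n : ℕ} {F : Set (α → ℝ)} (hF : F.Nonempty) (x : Fin n → α)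
    (U : (Fin n → Bool) → ℝ) (hU : ∀ σ, ∀ f ∈ F, ∑ i, boolSign (σ i) * f (x i) ≤ U σ) :
    radEmp F x ≤ (2 ^ n)⁻¹ * ((n : ℝ)⁻¹ * ∑ σ, U σ) := by
  rw [radEmp]
  gcongr
  rw [mul_sum]
  gcongr with σ
  obtain ⟨f₀, hf₀⟩ := hF
  refine csSup_le ⟨_, f₀, hf₀, rfl⟩ ?_
  rintro _ ⟨f, hf, rfl⟩
  gcongr
  exact hU σ f hf

theorem stmt_2_general {d m n : ℕ} (C1 C3 C4 L : ℝ)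
    (hC1 : 0 < C1) (hC3 : 0 < C3) (hC4 : 0 < C4) (hL : 0 < L)
    (h : ℝ → ℝ) (hLip : LipschitzWith L.toNNReal h)
    (x : Fin n → EuclideanSpace ℝ (Fin d)) (hx : ∀ i, ‖x i‖ ≤ C1) :
    radEmp {f | ∃ (α : EuclideanSpace ℝ (Fin m)) (w : Fin m → EuclideanSpace ℝ (Fin d)),
        ‖α‖ ≤ C4 ∧ (∀ j, ‖w j‖ ≤ C3) ∧ f = fun y => ∑ j, α j * h ⟪w j, y⟫} x ≤
      2 * L * C1 * C3 * C4 * Real.sqrt m / Real.sqrt n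
        + C4 * |h 0| * Real.sqrt m / Real.sqrt n := by
  set P := fun σ : Fin n → Bool =>
    sSup (signedSum (fun i w => h ⟪w, x i⟫ - h 0) σ '' Metric.closedBall 0 C3)
  set T := fun σ : Fin n → Bool => |∑ i, boolSign (σ i)|
  have hP : ∑ σ, P σ ≤ L * C3 * (2 ^ n * C1 * √n) := by
    simpa [Real.coe_toNNReal L hL.le] using
      sum_sSup_signedSum_comp_inner_le hLip hC1.le hC3.le hx
  have hT : ∑ σ, T σ ≤ 2 ^ n * 1 * √n := by
    simpa [T] using sum_norm_sum_boolSign_smul_le (v := fun _ : Fin n => (1 : ℝ)) zero_le_one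
      (by simp)
  calc _ ≤ (2 ^ n)⁻¹ * ((n : ℝ)⁻¹ * ∑ σ, C4 * (√m * (P σ + P (fun i => !σ i) + |h 0| * T σ))) := by
        refine radEmp_le ?_ x _ ?_
        · exact ⟨_, 0, 0, by simp [hC4.le], by simp [hC3.le], rfl⟩
        rintro σ _ ⟨α, w, hα, hw, rfl⟩
        have hB := (abs_nonneg _).trans
          (abs_signedSum_comp_inner_le hLip hx σ (norm_zero.trans_le hC3.le))
        exact (sum_boolSign_mul_sum_mul_le _ σ α w hB
          fun j => abs_signedSum_comp_inner_le hLip hx σ (hw j)).trans (by gcongr)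
    _ = (2 ^ n)⁻¹ * ((n : ℝ)⁻¹ * (C4 * (√m * (2 * ∑ σ, P σ + |h 0| * ∑ σ, T σ)))) := by
        simp only [← mul_sum, sum_add_distrib, sum_comp_not P]
        ring
    _ ≤ (2 ^ n)⁻¹ * ((n : ℝ)⁻¹
          * (C4 * (√m * (2 * (L * C3 * (2 ^ n * C1 * √n)) + |h 0| * (2 ^ n * 1 * √n))))) := by
        gcongr
    _ = (2 ^ n)⁻¹ * 2 ^ n * (√n / n) * (C4 * √m * (2 * L * C3 * C1 + |h 0|)) := by ring
    _ = _ := by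
        rw [inv_mul_cancel₀ (by positivity), Real.sqrt_div_self]
        ring

/-- paper's Lemma 3. For the one-hidden-layer class
`F = {x ↦ Σ_j α_j h(⟨w_j, x⟩) : ‖α‖₂ ≤ C4, ‖w_j‖₂ ≤ C3}` with `L`-Lipschitz activation `h`,
and sample points of norm at most `C1`,
`R̂_n(F) ≤ 2 L C1 C3 C4 √m/√n + C4 |h(0)| √m/√n`. -/
theorem stmt_2 {d m n : ℕ} (hn : 0 < n) (C1 C3 C4 L : ℝ)
    (hC1 : 0 < C1) (hC3 : 0 < C3) (hC4 : 0 < C4) (hL : 0 < L)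
    (h : ℝ → ℝ) (hLip : LipschitzWith L.toNNReal h)
    (x : Fin n → EuclideanSpace ℝ (Fin d)) (hx : ∀ i, ‖x i‖ ≤ C1) :
    radEmp {f | ∃ (α : EuclideanSpace ℝ (Fin m)) (w : Fin m → EuclideanSpace ℝ (Fin d)),
        ‖α‖ ≤ C4 ∧ (∀ j, ‖w j‖ ≤ C3) ∧ f = fun y => ∑ j, α j * h ⟪w j, y⟫} x ≤
      2 * L * C1 * C3 * C4 * Real.sqrt m / Real.sqrt n
        + C4 * |h 0| * Real.sqrt m / Real.sqrt n :=
  stmt_2_general C1 C3 C4 L hC1 hC3 hC4 hL h hLip x hx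
end

section
/- Fix m ∈ ℕ, C3 > 0 and θ ∈ [0, π/2]. Let w_1,…,w_m ∈ ℝ^d be nonzero vectors with ‖w_j‖₂ ≤ C3 for all j and ρ(w_j, w_k) ≥ θ for all j ≠ k, and let W ∈ ℝ^{d×m} be the matrix with columns w_1,…,w_m. Then the operator norm of W satisfies ‖W‖_op² ≤ ((m−1) cos θ + 1) C3². -/
/-!
Writing `u = (u_j)`, `‖W u‖² = ∑_{j,k} u_j u_k ⟨w_j, w_k⟩`. The angle condition gives
`|⟨w_j, w_k⟩| ≤ cos θ · C3²` for `j ≠ k`, and `⟨w_j, w_j⟩ ≤ C3²`, so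
`‖W u‖² ≤ C3² ((1 - cos θ) ‖u‖² + cos θ (∑ |u_j|)²) ≤ C3² ((1 - cos θ) + m cos θ) ‖u‖²`
by Cauchy–Schwarz `(∑ |u_j|)² ≤ m ‖u‖²`.
-/

open RealInnerProductSpace

/-- The nonobtuse angle `ρ(u,v) = arccos(|⟨u,v⟩| / (‖u‖‖v‖))` between two vectors. -/
noncomputable def rho {E : Type*} [NormedAddCommGroup E] [InnerProductSpace ℝ E]
    (u v : E) : ℝ :=
  Real.arccos (|⟪u, v⟫| / (‖u‖ * ‖v‖))

/-- The operator norm `‖W‖_op = sup_{‖u‖₂=1} ‖Wu‖₂` of a matrix, viewed as a linear map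
between Euclidean spaces. -/
noncomputable def matOpNorm {d m : ℕ} (W : Matrix (Fin d) (Fin m) ℝ) : ℝ :=
  ‖LinearMap.toContinuousLinearMap (Matrix.toEuclideanLin W)‖

open Finset

theorem abs_inner_eq_cos_rho_mul_norm {E : Type*} [NormedAddCommGroup E]
    [InnerProductSpace ℝ E] (u v : E) : |⟪u, v⟫| = Real.cos (rho u v) * (‖u‖ * ‖v‖) := by
  rcases eq_or_ne (‖u‖ * ‖v‖) 0 with h | h
  · rcases mul_eq_zero.mp h with hu | hv
    · simp [norm_eq_zero.mp hu]
    · simp [norm_eq_zero.mp hv]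
  have hle : |⟪u, v⟫| / (‖u‖ * ‖v‖) ≤ 1 :=
    div_le_one_of_le₀ (abs_real_inner_le_norm u v) (by positivity)
  rw [rho, Real.cos_arccos (by linarith [show 0 ≤ |⟪u, v⟫| / (‖u‖ * ‖v‖) by positivity]) hle,
    div_mul_cancel₀ _ h]

theorem abs_inner_le_cos_mul_norm_of_le_rho {E : Type*} [NormedAddCommGroup E]
    [InnerProductSpace ℝ E] {u v : E} {θ : ℝ} (hθ : 0 ≤ θ) (h : θ ≤ rho u v) :
    |⟪u, v⟫| ≤ Real.cos θ * (‖u‖ * ‖v‖) := by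
  rw [abs_inner_eq_cos_rho_mul_norm]
  gcongr
  exact Real.cos_le_cos_of_nonneg_of_le_pi hθ (Real.arccos_le_pi _) h

theorem norm_sum_smul_sq_eq {ι E : Type*} [Fintype ι] [NormedAddCommGroup E]
    [InnerProductSpace ℝ E] (u : ι → ℝ) (w : ι → E) :
    ‖∑ j, u j • w j‖ ^ 2 = ∑ j, ∑ k, u j * u k * ⟪w j, w k⟫ := by
  rw [← real_inner_self_eq_norm_sq, sum_inner]
  refine sum_congr rfl fun j _ => ?_
  rw [real_inner_smul_left, inner_sum, mul_sum]
  refine sum_congr rfl fun k _ => ?_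
  rw [real_inner_smul_right]
  ring

theorem norm_sum_smul_sq_le {ι E : Type*} [Fintype ι] [NormedAddCommGroup E]
    [InnerProductSpace ℝ E] {w : ι → E} {C c : ℝ} (hc : 0 ≤ c) (hw : ∀ j, ‖w j‖ ≤ C)
    (hoff : ∀ j k, j ≠ k → |⟪w j, w k⟫| ≤ c * C ^ 2) (u : ι → ℝ) :
    ‖∑ j, u j • w j‖ ^ 2 ≤ ((Fintype.card ι - 1) * c + 1) * C ^ 2 * ∑ j, u j ^ 2 := by
  classical
  have hterm : ∀ j k, u j * u k * ⟪w j, w k⟫ ≤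
      c * C ^ 2 * (|u j| * |u k|) + if j = k then (1 - c) * C ^ 2 * u j ^ 2 else 0 := by
    intro j k
    rcases eq_or_ne j k with rfl | hjk
    · have : ‖w j‖ ^ 2 ≤ C ^ 2 := pow_le_pow_left₀ (norm_nonneg _) (hw j) 2
      rw [if_pos rfl, real_inner_self_eq_norm_sq, ← abs_mul, abs_mul_self]
      nlinarith [sq_nonneg (u j)]
    · rw [if_neg hjk, add_zero]
      calc u j * u k * ⟪w j, w k⟫ ≤ |u j| * |u k| * |⟪w j, w k⟫| := by
            rw [← abs_mul, ← abs_mul]; exact le_abs_self _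
        _ ≤ |u j| * |u k| * (c * C ^ 2) := by gcongr; exact hoff j k hjk
        _ = _ := by ring
  have hcs : (∑ j, |u j|) ^ 2 ≤ Fintype.card ι * ∑ j, u j ^ 2 := by
    simpa only [sq_abs, card_univ] using sq_sum_le_card_mul_sum_sq (s := univ) (f := fun j => |u j|)
  calc ‖∑ j, u j • w j‖ ^ 2
      ≤ ∑ j, ∑ k, (c * C ^ 2 * (|u j| * |u k|) +
          if j = k then (1 - c) * C ^ 2 * u j ^ 2 else 0) := by
        rw [norm_sum_smul_sq_eq]; gcongr with j _ k _; exact hterm j k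
    _ = c * C ^ 2 * (∑ j, |u j|) ^ 2 + (1 - c) * C ^ 2 * ∑ j, u j ^ 2 := by
        rw [sq (∑ j, |u j|), sum_mul_sum, mul_sum, mul_sum]
        simp only [sum_add_distrib, sum_ite_eq, mem_univ, if_true, mul_sum]
    _ ≤ c * C ^ 2 * (Fintype.card ι * ∑ j, u j ^ 2) + (1 - c) * C ^ 2 * ∑ j, u j ^ 2 := by
        gcongr
    _ = _ := by ring

theorem Matrix.toEuclideanLin_apply_eq_sum_smul_col {d m : ℕ} {W : Matrix (Fin d) (Fin m) ℝ}
    {w : Fin m → EuclideanSpace ℝ (Fin d)} (hW : ∀ i j, W i j = w j i)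
    (u : EuclideanSpace ℝ (Fin m)) : Matrix.toEuclideanLin W u = ∑ j, u j • w j := by
  ext i
  simp [Matrix.mulVec, dotProduct, hW, mul_comm]

theorem ContinuousLinearMap.opNorm_sq_le_of_norm_sq_le {E F : Type*} [NormedAddCommGroup E]
    [NormedAddCommGroup F] [NormedSpace ℝ E] [NormedSpace ℝ F] (T : E →L[ℝ] F) {B : ℝ}
    (hB : 0 ≤ B) (h : ∀ u, ‖T u‖ ^ 2 ≤ B * ‖u‖ ^ 2) : ‖T‖ ^ 2 ≤ B := by
  have : ‖T‖ ≤ √B := T.opNorm_le_bound (Real.sqrt_nonneg B) fun u => by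
    rw [← Real.sqrt_sq (norm_nonneg (T u)), ← Real.sqrt_sq (norm_nonneg u), ← Real.sqrt_mul hB]
    exact Real.sqrt_le_sqrt (h u)
  calc ‖T‖ ^ 2 ≤ √B ^ 2 := by gcongr
    _ = B := Real.sq_sqrt hB

theorem stmt_4_general {d m : ℕ} (C3 θ : ℝ) (hθ : θ ∈ Set.Icc 0 (Real.pi / 2))
    (w : Fin m → EuclideanSpace ℝ (Fin d))
    (hwn : ∀ j, ‖w j‖ ≤ C3)
    (hang : ∀ j k, j ≠ k → θ ≤ rho (w j) (w k))
    (W : Matrix (Fin d) (Fin m) ℝ) (hW : ∀ i j, W i j = w j i) :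
    matOpNorm W ^ 2 ≤ ((m - 1 : ℝ) * Real.cos θ + 1) * C3 ^ 2 := by
  have hcos : 0 ≤ Real.cos θ :=
    Real.cos_nonneg_of_mem_Icc ⟨by linarith [hθ.1, Real.pi_pos], hθ.2⟩
  have hoff : ∀ j k, j ≠ k → |⟪w j, w k⟫| ≤ Real.cos θ * C3 ^ 2 := fun j k hjk =>
    (abs_inner_le_cos_mul_norm_of_le_rho hθ.1 (hang j k hjk)).trans <| by
      gcongr
      rw [sq]
      exact mul_le_mul (hwn j) (hwn k) (norm_nonneg _) ((norm_nonneg _).trans (hwn j))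
  have hB : 0 ≤ ((m - 1 : ℝ) * Real.cos θ + 1) * C3 ^ 2 := by
    have : (m - 1 : ℝ) * Real.cos θ + 1 = m * Real.cos θ + (1 - Real.cos θ) := by ring
    rw [this]
    have := Real.cos_le_one θ
    positivity
  refine ContinuousLinearMap.opNorm_sq_le_of_norm_sq_le _ hB fun u => ?_
  rw [LinearMap.coe_toContinuousLinearMap', Matrix.toEuclideanLin_apply_eq_sum_smul_col hW,
    EuclideanSpace.norm_sq_eq u]
  simpa only [Real.norm_eq_abs, sq_abs, Fintype.card_fin] using norm_sum_smul_sq_le hcos hwn hoff u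

/-- If the columns `w_1,…,w_m` of `W` are nonzero, have norm at most `C3`
and pairwise nonobtuse angles at least `θ ∈ [0, π/2]`, then
`‖W‖_op² ≤ ((m−1) cos θ + 1) C3²`. -/
theorem stmt_4 {d m : ℕ} (C3 θ : ℝ) (hC3 : 0 < C3) (hθ : θ ∈ Set.Icc 0 (Real.pi / 2))
    (w : Fin m → EuclideanSpace ℝ (Fin d))
    (hw0 : ∀ j, w j ≠ 0) (hwn : ∀ j, ‖w j‖ ≤ C3)
    (hang : ∀ j k, j ≠ k → θ ≤ rho (w j) (w k))
    (W : Matrix (Fin d) (Fin m) ℝ) (hW : ∀ i j, W i j = w j i) :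
    matOpNorm W ^ 2 ≤ ((m - 1 : ℝ) * Real.cos θ + 1) * C3 ^ 2 :=
  stmt_4_general C3 θ hθ w hwn hang W hW
end

section
/- Fix d, m ∈ ℕ, constants C1, C3, C4 > 0, L > 0, θ ∈ [0, π/2], and an L-Lipschitz function h : ℝ → ℝ. Let f ∈ F_θ and x ∈ ℝ^d with ‖x‖₂ ≤ C1. Then |f(x)| ≤ √J, where J = m C4² h(0)² + L² C1² C3² C4² ((m−1)cos θ + 1) + 2√m C1 C3 C4² L |h(0)| √((m−1)cos θ + 1). -/
open RealInnerProductSpace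

private lemma sum_sq_le_of_norm_le {m : ℕ} {C4 : ℝ} (α : EuclideanSpace ℝ (Fin m))
    (hα : ‖α‖ ≤ C4) : ∑ j, α j ^ 2 ≤ C4 ^ 2 := by
  have hnorm : ‖α‖ ^ 2 = ∑ j, α j ^ 2 := by
    rw [EuclideanSpace.norm_eq,
      Real.sq_sqrt (Finset.sum_nonneg fun j _ => sq_nonneg _)]
    simp [Real.norm_eq_abs, sq_abs]
  rw [← hnorm]
  exact pow_le_pow_left₀ (norm_nonneg α) hα 2

/-- Any member `f(x) = Σ_j α_j h(⟨w_j,x⟩)` of the diversity-constrained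
class `F_θ` (with `‖α‖₂ ≤ C4`, `‖w_j‖₂ ≤ C3`, pairwise nonobtuse angles at least `θ`)
satisfies `|f(x)| ≤ √J` for all `‖x‖₂ ≤ C1`, where
`J = m C4² h(0)² + L² C1² C3² C4² ((m−1)cos θ + 1)
   + 2 √m C1 C3 C4² L |h(0)| √((m−1)cos θ + 1)`. -/
theorem stmt_6 {d m : ℕ} (C1 C3 C4 L θ : ℝ)
    (hC1 : 0 < C1) (hC3 : 0 < C3) (hC4 : 0 < C4) (hL : 0 < L)
    (hθ : θ ∈ Set.Icc 0 (Real.pi / 2))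
    (h : ℝ → ℝ) (hLip : LipschitzWith L.toNNReal h)
    (α : EuclideanSpace ℝ (Fin m)) (hα : ‖α‖ ≤ C4)
    (w : Fin m → EuclideanSpace ℝ (Fin d))
    (hw0 : ∀ j, w j ≠ 0) (hwn : ∀ j, ‖w j‖ ≤ C3)
    (hang : ∀ i j, i ≠ j → θ ≤ rho (w i) (w j))
    (x : EuclideanSpace ℝ (Fin d)) (hx : ‖x‖ ≤ C1) :
    |∑ j, α j * h ⟪w j, x⟫| ≤
      Real.sqrt (m * C4 ^ 2 * h 0 ^ 2
        + L ^ 2 * C1 ^ 2 * C3 ^ 2 * C4 ^ 2 * ((m - 1 : ℝ) * Real.cos θ + 1)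
        + 2 * Real.sqrt m * C1 * C3 * C4 ^ 2 * L * |h 0|
            * Real.sqrt ((m - 1 : ℝ) * Real.cos θ + 1)) := by
  obtain ⟨hθ0, hθπ⟩ := hθ
  have hπ := Real.pi_pos
  have hcos0 : 0 ≤ Real.cos θ :=
    Real.cos_nonneg_of_mem_Icc ⟨by linarith, hθπ⟩
  have hcos1 : Real.cos θ ≤ 1 := Real.cos_le_one θ
  set c : Fin m → ℝ := fun j => ⟪w j, x⟫ with hc
  set S : ℝ := ∑ j, c j ^ 2 with hS
  set T : ℝ := ∑ j, |c j| with hT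
  set K : ℝ := (m - 1 : ℝ) * Real.cos θ + 1 with hK
  have hS0 : 0 ≤ S := Finset.sum_nonneg fun j _ => sq_nonneg _
  have hT0 : 0 ≤ T := Finset.sum_nonneg fun j _ => abs_nonneg _
  have hK0 : 0 ≤ K := by
    rcases Nat.eq_zero_or_pos m with hm | hm
    · subst hm; simp only [hK]; push_cast; linarith
    · have h1 : (1:ℝ) ≤ m := by exact_mod_cast hm
      have : 0 ≤ ((m:ℝ) - 1) * Real.cos θ := mul_nonneg (by linarith) hcos0
      simp only [hK]; linarith
  set A := Real.sqrt K with hA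
  set B := Real.sqrt (m:ℝ) with hB
  have hA0 : 0 ≤ A := Real.sqrt_nonneg _
  have hB0 : 0 ≤ B := Real.sqrt_nonneg _
  have hA2 : A ^ 2 = K := Real.sq_sqrt hK0
  have hB2 : B ^ 2 = (m:ℝ) := Real.sq_sqrt (Nat.cast_nonneg m)
  -- pairwise inner product bound from the angle condition
  show |∑ j, α j * h (c j)| ≤
      Real.sqrt ((m:ℝ) * C4 ^ 2 * h 0 ^ 2 + L ^ 2 * C1 ^ 2 * C3 ^ 2 * C4 ^ 2 * K
        + 2 * B * C1 * C3 * C4 ^ 2 * L * |h 0| * A)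
  have hinner : ∀ i j, i ≠ j → |⟪w i, w j⟫| ≤ Real.cos θ * (C3 * C3) := by
    intro i j hij
    have hni : 0 < ‖w i‖ := norm_pos_iff.mpr (hw0 i)
    have hnj : 0 < ‖w j‖ := norm_pos_iff.mpr (hw0 j)
    set q : ℝ := |⟪w i, w j⟫| / (‖w i‖ * ‖w j‖) with hq
    have hq0 : 0 ≤ q := div_nonneg (abs_nonneg _) (by positivity)
    have hq1 : q ≤ 1 := by
      rw [hq, div_le_one (by positivity)]
      exact abs_real_inner_le_norm _ _
    have harc : θ ≤ Real.arccos q := hang i j hij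
    have hqcos : q ≤ Real.cos θ := by
      have := Real.cos_le_cos_of_nonneg_of_le_pi hθ0 (Real.arccos_le_pi q) harc
      rwa [Real.cos_arccos (by linarith) hq1] at this
    have heq : |⟪w i, w j⟫| = q * (‖w i‖ * ‖w j‖) := by
      rw [hq]; field_simp
    rw [heq]
    have hn : ‖w i‖ * ‖w j‖ ≤ C3 * C3 :=
      mul_le_mul (hwn i) (hwn j) hnj.le (by linarith)
    exact mul_le_mul hqcos hn (by positivity) hcos0
  set y : EuclideanSpace ℝ (Fin d) := ∑ j, c j • w j with hy
  have hyx : ⟪y, x⟫ = S := by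
    rw [hy, sum_inner, hS]
    refine Finset.sum_congr rfl fun j _ => ?_
    rw [real_inner_smul_left, sq]
  have hexp : ⟪y, y⟫ = ∑ i, ∑ j, c i * (c j * ⟪w i, w j⟫) := by
    rw [hy, sum_inner]
    refine Finset.sum_congr rfl fun i _ => ?_
    rw [real_inner_smul_left, inner_sum, Finset.mul_sum]
    refine Finset.sum_congr rfl fun j _ => ?_
    rw [real_inner_smul_right]
  have hyy : ⟪y, y⟫ ≤ Real.cos θ * C3 ^ 2 * T ^ 2 + (1 - Real.cos θ) * C3 ^ 2 * S := by
    rw [hexp]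
    have step1 : ∑ i, ∑ j, c i * (c j * ⟪w i, w j⟫)
        ≤ ∑ i, ∑ j, (Real.cos θ * C3 ^ 2 * (|c i| * |c j|)
            + if i = j then (1 - Real.cos θ) * C3 ^ 2 * c i ^ 2 else 0) := by
      refine Finset.sum_le_sum fun i _ => Finset.sum_le_sum fun j _ => ?_
      by_cases hij : i = j
      · subst hij
        rw [if_pos rfl]
        have h1 : ⟪w i, w i⟫ = ‖w i‖ ^ 2 := real_inner_self_eq_norm_sq _
        have h2 : ‖w i‖ ^ 2 ≤ C3 ^ 2 := pow_le_pow_left₀ (norm_nonneg (w i)) (hwn i) 2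
        have habs : |c i| * |c i| = c i ^ 2 := by
          rw [← abs_mul, abs_mul_self, sq]
        rw [habs, h1]
        calc c i * (c i * ‖w i‖ ^ 2) = c i ^ 2 * ‖w i‖ ^ 2 := by ring
          _ ≤ c i ^ 2 * C3 ^ 2 := mul_le_mul_of_nonneg_left h2 (sq_nonneg _)
          _ = Real.cos θ * C3 ^ 2 * c i ^ 2 + (1 - Real.cos θ) * C3 ^ 2 * c i ^ 2 := by ring
      · simp only [if_neg hij, add_zero]
        have h3 := hinner i j hij
        calc c i * (c j * ⟪w i, w j⟫) ≤ |c i * (c j * ⟪w i, w j⟫)| := le_abs_self _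
          _ = |c i| * |c j| * |⟪w i, w j⟫| := by rw [abs_mul, abs_mul]; ring
          _ ≤ |c i| * |c j| * (Real.cos θ * (C3 * C3)) :=
              mul_le_mul_of_nonneg_left h3 (by positivity)
          _ = Real.cos θ * C3 ^ 2 * (|c i| * |c j|) := by ring
    refine step1.trans (le_of_eq ?_)
    rw [Finset.sum_congr rfl fun i _ => Finset.sum_add_distrib, Finset.sum_add_distrib]
    have e1 : ∑ i : Fin m, ∑ j : Fin m, Real.cos θ * C3 ^ 2 * (|c i| * |c j|)
        = Real.cos θ * C3 ^ 2 * T ^ 2 := by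
      have h2 : T ^ 2 = ∑ i : Fin m, ∑ j : Fin m, |c i| * |c j| := by
        rw [hT, pow_two]; exact Fintype.sum_mul_sum _ _
      rw [h2, Finset.mul_sum]
      exact Finset.sum_congr rfl fun i _ => (Finset.mul_sum _ _ _).symm
    have e2 : ∑ i : Fin m, ∑ j : Fin m,
        (if i = j then (1 - Real.cos θ) * C3 ^ 2 * c i ^ 2 else 0)
        = (1 - Real.cos θ) * C3 ^ 2 * S := by
      rw [hS, Finset.mul_sum]
      refine Finset.sum_congr rfl fun i _ => ?_
      simp
    rw [e1, e2]
  have hT2 : T ^ 2 ≤ (m : ℝ) * S := by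
    have := sq_sum_le_card_mul_sum_sq (s := Finset.univ) (f := fun j => |c j|)
    simpa [sq_abs, hT, hS] using this
  clear_value y c S T K A B
  have hyy2 : ⟪y, y⟫ ≤ C3 ^ 2 * S * K := by
    have h1 : Real.cos θ * C3 ^ 2 * T ^ 2 ≤ Real.cos θ * C3 ^ 2 * ((m:ℝ) * S) :=
      mul_le_mul_of_nonneg_left hT2 (by positivity)
    have heq : C3 ^ 2 * S * K
        = Real.cos θ * C3 ^ 2 * ((m:ℝ) * S) + (1 - Real.cos θ) * C3 ^ 2 * S := by
      rw [hK]; ring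
    linarith
  obtain ⟨N, hNy, hN0⟩ : ∃ N : ℝ, ‖y‖ = N ∧ 0 ≤ N := ⟨‖y‖, rfl, norm_nonneg _⟩
  have hSy : S ≤ C1 * N := by
    calc S = ⟪y, x⟫ := hyx.symm
      _ ≤ ‖y‖ * ‖x‖ := real_inner_le_norm y x
      _ ≤ ‖y‖ * C1 := mul_le_mul_of_nonneg_left hx (norm_nonneg y)
      _ = C1 * N := by rw [hNy, mul_comm]
  have hN2 : N ^ 2 ≤ C3 ^ 2 * S * K := by
    rw [← hNy, ← real_inner_self_eq_norm_sq]
    exact hyy2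
  clear hyx hexp hyy hyy2 hNy hy hinner
  clear y
  have hS2 : S ^ 2 ≤ C1 ^ 2 * (C3 ^ 2 * S * K) := by
    calc S ^ 2 = S * S := sq S
      _ ≤ (C1 * N) * (C1 * N) := mul_le_mul hSy hSy hS0 (mul_nonneg hC1.le hN0)
      _ = C1 ^ 2 * N ^ 2 := by ring
      _ ≤ C1 ^ 2 * (C3 ^ 2 * S * K) := mul_le_mul_of_nonneg_left hN2 (sq_nonneg C1)
  have hSK : S ≤ C1 ^ 2 * C3 ^ 2 * K := by
    rcases eq_or_lt_of_le hS0 with h0 | h0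
    · rw [← h0]; positivity
    · have h1 : S * S ≤ S * (C1 ^ 2 * C3 ^ 2 * K) := by
        calc S * S = S ^ 2 := (sq S).symm
          _ ≤ C1 ^ 2 * (C3 ^ 2 * S * K) := hS2
          _ = S * (C1 ^ 2 * C3 ^ 2 * K) := by ring
      exact le_of_mul_le_mul_left h1 h0
  have hTA : T ≤ B * (C1 * C3 * A) := by
    have heq : (B * (C1 * C3 * A)) ^ 2 = (m:ℝ) * (C1 ^ 2 * C3 ^ 2 * K) := by
      rw [mul_pow, mul_pow, mul_pow, hA2, hB2]; try ring
    have h1 : T ^ 2 ≤ (B * (C1 * C3 * A)) ^ 2 := by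
      rw [heq]
      calc T ^ 2 ≤ (m:ℝ) * S := hT2
        _ ≤ (m:ℝ) * (C1 ^ 2 * C3 ^ 2 * K) :=
            mul_le_mul_of_nonneg_left hSK (Nat.cast_nonneg m)
    have hR0 : 0 ≤ B * (C1 * C3 * A) := mul_nonneg hB0 (by positivity)
    calc T = Real.sqrt (T ^ 2) := (Real.sqrt_sq hT0).symm
      _ ≤ Real.sqrt ((B * (C1 * C3 * A)) ^ 2) := Real.sqrt_le_sqrt h1
      _ = B * (C1 * C3 * A) := Real.sqrt_sq hR0
  have hh : ∀ t : ℝ, |h t| ≤ |h 0| + L * |t| := by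
    intro t
    have hd := hLip.dist_le_mul t 0
    rw [Real.dist_eq, Real.dist_eq, sub_zero, Real.coe_toNNReal L hL.le] at hd
    calc |h t| = |h t - h 0 + h 0| := by ring_nf
      _ ≤ |h t - h 0| + |h 0| := abs_add_le _ _
      _ ≤ L * |t| + |h 0| := by linarith
      _ = |h 0| + L * |t| := by ring
  have hW : ∑ j, (h (c j)) ^ 2 ≤ (m:ℝ) * h 0 ^ 2 + 2 * L * |h 0| * T + L ^ 2 * S := by
    have hterm : ∀ j, (h (c j)) ^ 2 ≤ h 0 ^ 2 + 2 * L * |h 0| * |c j| + L ^ 2 * c j ^ 2 := by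
      intro j
      have h1 := hh (c j)
      have h2 : (h (c j)) ^ 2 ≤ (|h 0| + L * |c j|) ^ 2 := by
        have := pow_le_pow_left₀ (abs_nonneg (h (c j))) h1 2
        rwa [sq_abs] at this
      calc (h (c j)) ^ 2 ≤ (|h 0| + L * |c j|) ^ 2 := h2
        _ = h 0 ^ 2 + 2 * L * |h 0| * |c j| + L ^ 2 * c j ^ 2 := by
            rw [add_sq, mul_pow, sq_abs, sq_abs]; ring
    calc ∑ j, (h (c j)) ^ 2
        ≤ ∑ j, (h 0 ^ 2 + 2 * L * |h 0| * |c j| + L ^ 2 * c j ^ 2) :=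
          Finset.sum_le_sum fun j _ => hterm j
      _ = (m:ℝ) * h 0 ^ 2 + 2 * L * |h 0| * T + L ^ 2 * S := by
          rw [Finset.sum_add_distrib, Finset.sum_add_distrib, Finset.sum_const,
            ← Finset.mul_sum, ← Finset.mul_sum, hT, hS]
          simp [Finset.card_univ, nsmul_eq_mul]
  have hv0 : 0 ≤ ∑ j, (h (c j)) ^ 2 := Finset.sum_nonneg fun j _ => sq_nonneg _
  have hW' : ∑ j, (h (c j)) ^ 2
      ≤ (m:ℝ) * h 0 ^ 2 + 2 * L * |h 0| * (B * (C1 * C3 * A)) + L ^ 2 * (C1 ^ 2 * C3 ^ 2 * K) := by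
    have h1 : 2 * L * |h 0| * T ≤ 2 * L * |h 0| * (B * (C1 * C3 * A)) :=
      mul_le_mul_of_nonneg_left hTA (by positivity)
    have h2 : L ^ 2 * S ≤ L ^ 2 * (C1 ^ 2 * C3 ^ 2 * K) :=
      mul_le_mul_of_nonneg_left hSK (sq_nonneg L)
    linarith
  have hα2 : ∑ j, α j ^ 2 ≤ C4 ^ 2 := sum_sq_le_of_norm_le α hα
  have hα0 : 0 ≤ ∑ j, α j ^ 2 := Finset.sum_nonneg fun j _ => sq_nonneg _
  have hCS : (∑ j, α j * h (c j)) ^ 2 ≤ (∑ j, α j ^ 2) * (∑ j, (h (c j)) ^ 2) :=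
    Finset.sum_mul_sq_le_sq_mul_sq Finset.univ _ _
  have hJ : (∑ j, α j * h (c j)) ^ 2
      ≤ (m:ℝ) * C4 ^ 2 * h 0 ^ 2 + L ^ 2 * C1 ^ 2 * C3 ^ 2 * C4 ^ 2 * K
        + 2 * B * C1 * C3 * C4 ^ 2 * L * |h 0| * A := by
    have h1 : (∑ j, α j ^ 2) * (∑ j, (h (c j)) ^ 2)
        ≤ C4 ^ 2 * ((m:ℝ) * h 0 ^ 2 + 2 * L * |h 0| * (B * (C1 * C3 * A))
            + L ^ 2 * (C1 ^ 2 * C3 ^ 2 * K)) :=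
      mul_le_mul hα2 hW' hv0 (sq_nonneg C4)
    calc (∑ j, α j * h (c j)) ^ 2 ≤ _ := hCS
      _ ≤ _ := h1
      _ = _ := by ring
  have key : |∑ j, α j * h (c j)| ≤
      Real.sqrt ((m:ℝ) * C4 ^ 2 * h 0 ^ 2 + L ^ 2 * C1 ^ 2 * C3 ^ 2 * C4 ^ 2 * K
        + 2 * B * C1 * C3 * C4 ^ 2 * L * |h 0| * A) := by
    rw [← Real.sqrt_sq_eq_abs]
    exact Real.sqrt_le_sqrt hJ
  exact key
end

section
/- Fix k, m ∈ ℕ, c > 0, θ ∈ [0, π/2], L > 0, and an L-Lipschitz function h : ℝ → ℝ. Let w_1,…,w_m ∈ ℝ^k be nonzero vectors with ‖w_j‖₂ ≤ c for all j and ρ(w_j, w_l) ≥ θ for all j ≠ l, and let W ∈ ℝ^{k×m} be the matrix with columns w_1,…,w_m. Then for every v ∈ ℝ^k, writing h∘v ∈ ℝ^k for the coordinatewise application of h to v, one has ‖Wᵀ(h∘v)‖₂² ≤ c² ((m−1)cos θ + 1) (k h(0)² + L² ‖v‖₂² + 2 L |h(0)| √k ‖v‖₂). -/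
/-!
Two independent estimates multiply. By the angle condition the Gram matrix of the `w j` has
diagonal entries at most `c²` and off-diagonal entries at most `c² cos θ` in absolute value, so
`‖∑ s_j w_j‖² ≤ c² (1 - cos θ) ∑ s_j² + c² cos θ (∑ |s_j|)² ≤ c² ((m - 1) cos θ + 1) ∑ s_j²`;
taking `s_j = ⟪w_j, u⟫` and applying Cauchy–Schwarz to `∑ s_j² = ⟪∑ s_j w_j, u⟫` transfers this
bound to `∑ ⟪w_j, u⟫²`. On the other side, `h ∘ v` is the constant vector `h 0` plus a vector
dominated coordinatewise by `L |v|`, so `‖h ∘ v‖ ≤ √k |h 0| + L ‖v‖`, whose square is the last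
factor.
-/

open RealInnerProductSpace

section InnerProductSpace

variable {E : Type*} [NormedAddCommGroup E] [InnerProductSpace ℝ E]

theorem abs_inner_le_cos_mul_of_le_rho {u v : E} {θ : ℝ} (hθ : 0 ≤ θ) (h : θ ≤ rho u v) :
    |⟪u, v⟫| ≤ Real.cos θ * (‖u‖ * ‖v‖) := by
  have hCS := abs_real_inner_le_norm u v
  have hx0 : 0 ≤ |⟪u, v⟫| / (‖u‖ * ‖v‖) := by positivity
  have hx1 : |⟪u, v⟫| / (‖u‖ * ‖v‖) ≤ 1 := div_le_one_of_le₀ hCS (by positivity)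
  have hcos : |⟪u, v⟫| / (‖u‖ * ‖v‖) ≤ Real.cos θ :=
    calc _ = Real.cos (rho u v) := (Real.cos_arccos (by linarith) hx1).symm
      _ ≤ Real.cos θ := Real.cos_le_cos_of_nonneg_of_le_pi hθ (Real.arccos_le_pi _) h
  rcases (by positivity : 0 ≤ ‖u‖ * ‖v‖).eq_or_lt with h0 | hpos
  · rw [← h0, mul_zero]
    exact hCS.trans h0.ge
  · exact (div_le_iff₀ hpos).1 hcos

variable {ι : Type*} [Fintype ι]

theorem norm_sum_smul_sq_le_s10 {w : ι → E} {a b : ℝ} (hb : 0 ≤ b) (ha : ∀ j, ‖w j‖ ^ 2 ≤ a)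
    (hoff : ∀ j l, j ≠ l → |⟪w j, w l⟫| ≤ b) (s : ι → ℝ) :
    ‖∑ j, s j • w j‖ ^ 2 ≤ (a + (Fintype.card ι - 1) * b) * ∑ j, s j ^ 2 := by
  classical
  have hterm : ∀ j l, s j * s l * ⟪w j, w l⟫ ≤
      b * (|s j| * |s l|) + if j = l then (a - b) * s j ^ 2 else 0 := by
    intro j l
    by_cases hjl : j = l
    · subst hjl
      rw [if_pos rfl, real_inner_self_eq_norm_sq, ← abs_mul, abs_mul_self, ← sq]
      nlinarith [ha j, sq_nonneg (s j)]
    · rw [if_neg hjl, add_zero]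
      calc s j * s l * ⟪w j, w l⟫ ≤ |s j| * |s l| * |⟪w j, w l⟫| := by
            rw [← abs_mul, ← abs_mul]; exact le_abs_self _
        _ ≤ |s j| * |s l| * b := by gcongr; exact hoff j l hjl
        _ = b * (|s j| * |s l|) := mul_comm _ _
  have hsum_abs : (∑ j, |s j|) ^ 2 ≤ Fintype.card ι * ∑ j, s j ^ 2 := by
    simpa only [sq_abs, Finset.card_univ] using
      sq_sum_le_card_mul_sum_sq (s := Finset.univ) (f := fun j => |s j|)
  calc ‖∑ j, s j • w j‖ ^ 2 = ∑ j, ∑ l, s j * s l * ⟪w j, w l⟫ := by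
        rw [← real_inner_self_eq_norm_sq, sum_inner]
        simp only [inner_sum, real_inner_smul_left, real_inner_smul_right]
        exact Finset.sum_congr rfl fun j _ => Finset.sum_congr rfl fun l _ => by ring
    _ ≤ ∑ j, ∑ l, (b * (|s j| * |s l|) + if j = l then (a - b) * s j ^ 2 else 0) := by
        gcongr with j _ l _; exact hterm j l
    _ = b * (∑ j, |s j|) ^ 2 + (a - b) * ∑ j, s j ^ 2 := by
        simp only [Finset.sum_add_distrib, Finset.sum_ite_eq, Finset.mem_univ, if_true,
          ← Finset.mul_sum, sq, Finset.sum_mul_sum]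
    _ ≤ b * (Fintype.card ι * ∑ j, s j ^ 2) + (a - b) * ∑ j, s j ^ 2 := by gcongr
    _ = (a + (Fintype.card ι - 1) * b) * ∑ j, s j ^ 2 := by ring

theorem sum_inner_sq_le_of_norm_sum_smul_sq_le {w : ι → E} {A : ℝ} (hA : 0 ≤ A)
    (hw : ∀ s : ι → ℝ, ‖∑ j, s j • w j‖ ^ 2 ≤ A * ∑ j, s j ^ 2) (u : E) :
    ∑ j, ⟪w j, u⟫ ^ 2 ≤ A * ‖u‖ ^ 2 := by
  set S := ∑ j, ⟪w j, u⟫ ^ 2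
  set x := ∑ j, ⟪w j, u⟫ • w j
  have hS : S = ⟪x, u⟫ := by simp only [S, x, sum_inner, real_inner_smul_left, sq]
  have hS0 : 0 ≤ S := by positivity
  have : S ^ 2 ≤ A * ‖u‖ ^ 2 * S :=
    calc S ^ 2 ≤ (‖x‖ * ‖u‖) ^ 2 := by
          gcongr; rw [hS]; exact real_inner_le_norm x u
      _ = ‖x‖ ^ 2 * ‖u‖ ^ 2 := mul_pow _ _ _
      _ ≤ A * S * ‖u‖ ^ 2 := by gcongr; exact hw _
      _ = A * ‖u‖ ^ 2 * S := by ring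
  nlinarith [mul_nonneg hA (sq_nonneg ‖u‖)]

theorem sum_inner_sq_le_of_abs_inner_le {w : ι → E} {a b : ℝ} (hb : 0 ≤ b) (hba : b ≤ a)
    (ha : ∀ j, ‖w j‖ ^ 2 ≤ a) (hoff : ∀ j l, j ≠ l → |⟪w j, w l⟫| ≤ b) (u : E) :
    ∑ j, ⟪w j, u⟫ ^ 2 ≤ (a + (Fintype.card ι - 1) * b) * ‖u‖ ^ 2 := by
  refine sum_inner_sq_le_of_norm_sum_smul_sq_le ?_ (norm_sum_smul_sq_le_s10 hb ha hoff) u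
  have : (0 : ℝ) ≤ Fintype.card ι := Nat.cast_nonneg _
  nlinarith

end InnerProductSpace

theorem EuclideanSpace.norm_toLp_const {n : Type*} [Fintype n] (r : ℝ) :
    ‖(WithLp.toLp 2 (fun _ => r) : EuclideanSpace ℝ n)‖ = √(Fintype.card n) * |r| := by
  rw [← Real.sqrt_sq (norm_nonneg _), EuclideanSpace.real_norm_sq_eq]
  simp [Real.sqrt_mul, Real.sqrt_sq_eq_abs]

theorem LipschitzWith.norm_toLp_comp_le {K : NNReal} {h : ℝ → ℝ} (hh : LipschitzWith K h)
    {n : Type*} [Fintype n] (v : EuclideanSpace ℝ n) :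
    ‖(WithLp.toLp 2 (fun i => h (v i)) : EuclideanSpace ℝ n)‖ ≤
      √(Fintype.card n) * |h 0| + K * ‖v‖ := by
  set d : EuclideanSpace ℝ n := WithLp.toLp 2 (fun i => h (v i) - h 0)
  have hsplit : (WithLp.toLp 2 (fun i => h (v i)) : EuclideanSpace ℝ n) =
      WithLp.toLp 2 (fun _ => h 0) + d := by
    ext i; simp [d]
  have hd : ‖d‖ ≤ K * ‖v‖ := by
    refine le_of_pow_le_pow_left₀ two_ne_zero (by positivity) ?_
    rw [mul_pow, EuclideanSpace.real_norm_sq_eq, EuclideanSpace.real_norm_sq_eq, Finset.mul_sum]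
    refine Finset.sum_le_sum fun i _ => ?_
    have := hh.dist_le_mul (v i) 0
    rw [Real.dist_eq, Real.dist_eq, sub_zero] at this
    show (h (v i) - h 0) ^ 2 ≤ K ^ 2 * v i ^ 2
    rw [← sq_abs, ← sq_abs (v i), ← mul_pow]
    exact pow_le_pow_left₀ (abs_nonneg _) this 2
  calc _ ≤ ‖(WithLp.toLp 2 (fun _ => h 0) : EuclideanSpace ℝ n)‖ + ‖d‖ :=
        hsplit ▸ norm_add_le _ _
    _ ≤ √(Fintype.card n) * |h 0| + K * ‖v‖ := by
        rw [EuclideanSpace.norm_toLp_const]; gcongr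

theorem stmt_10_general {k m : ℕ} (c θ L : ℝ)
    (hθ : θ ∈ Set.Icc 0 (Real.pi / 2)) (hL : 0 < L)
    (h : ℝ → ℝ) (hLip : LipschitzWith L.toNNReal h)
    (w : Fin m → EuclideanSpace ℝ (Fin k))
    (hwn : ∀ j, ‖w j‖ ≤ c)
    (hang : ∀ j l, j ≠ l → θ ≤ rho (w j) (w l))
    (v : EuclideanSpace ℝ (Fin k)) :
    ∑ j, ⟪w j, (WithLp.toLp 2 (fun i => h (v i)) : EuclideanSpace ℝ (Fin k))⟫ ^ 2 ≤
      c ^ 2 * ((m - 1 : ℝ) * Real.cos θ + 1) *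
        (k * h 0 ^ 2 + L ^ 2 * ‖v‖ ^ 2 + 2 * L * |h 0| * Real.sqrt k * ‖v‖) := by
  have hcos : 0 ≤ Real.cos θ :=
    Real.cos_nonneg_of_mem_Icc ⟨by linarith [hθ.1, Real.pi_pos], hθ.2⟩
  have hdiag : ∀ j, ‖w j‖ ^ 2 ≤ c ^ 2 := fun j => pow_le_pow_left₀ (norm_nonneg _) (hwn j) 2
  have hoff : ∀ j l, j ≠ l → |⟪w j, w l⟫| ≤ c ^ 2 * Real.cos θ := fun j l hjl =>
    calc |⟪w j, w l⟫| ≤ Real.cos θ * (‖w j‖ * ‖w l‖) :=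
          abs_inner_le_cos_mul_of_le_rho hθ.1 (hang j l hjl)
      _ ≤ Real.cos θ * c ^ 2 := by
          gcongr
          exact sq c ▸ mul_le_mul (hwn j) (hwn l) (norm_nonneg _) ((norm_nonneg _).trans (hwn j))
      _ = c ^ 2 * Real.cos θ := mul_comm _ _
  have hA : 0 ≤ c ^ 2 * ((m - 1 : ℝ) * Real.cos θ + 1) :=
    mul_nonneg (sq_nonneg c) (by nlinarith [Real.cos_le_one θ, mul_nonneg m.cast_nonneg hcos])
  have hframe := sum_inner_sq_le_of_abs_inner_le (mul_nonneg (sq_nonneg c) hcos)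
    (mul_le_of_le_one_right (sq_nonneg c) (Real.cos_le_one θ)) hdiag hoff
    (WithLp.toLp 2 (fun i => h (v i)))
  have hnorm := hLip.norm_toLp_comp_le v
  rw [Real.coe_toNNReal L hL.le, Fintype.card_fin] at hnorm
  calc _ ≤ c ^ 2 * ((m - 1 : ℝ) * Real.cos θ + 1) * ‖WithLp.toLp 2 fun i => h (v i)‖ ^ 2 := by
        convert hframe using 2; rw [Fintype.card_fin]; ring
    _ ≤ c ^ 2 * ((m - 1 : ℝ) * Real.cos θ + 1) * (√k * |h 0| + L * ‖v‖) ^ 2 := by gcongr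
    _ = _ := by rw [add_sq, mul_pow, Real.sq_sqrt (Nat.cast_nonneg k), sq_abs]; ring

/-- Single-layer recursion step: if `w_1,…,w_m ∈ ℝ^k` are nonzero, have
norm at most `c` and pairwise nonobtuse angles at least `θ`, then for any `v ∈ ℝ^k`,
`‖Wᵀ(h∘v)‖₂² = Σ_j ⟨w_j, h∘v⟩² ≤ c²((m−1)cos θ + 1)(k h(0)² + L²‖v‖² + 2L|h(0)|√k ‖v‖)`,
where `h∘v` is the coordinatewise application of the `L`-Lipschitz function `h`. -/
theorem stmt_10 {k m : ℕ} (c θ L : ℝ) (hc : 0 < c)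
    (hθ : θ ∈ Set.Icc 0 (Real.pi / 2)) (hL : 0 < L)
    (h : ℝ → ℝ) (hLip : LipschitzWith L.toNNReal h)
    (w : Fin m → EuclideanSpace ℝ (Fin k))
    (hw0 : ∀ j, w j ≠ 0) (hwn : ∀ j, ‖w j‖ ≤ c)
    (hang : ∀ j l, j ≠ l → θ ≤ rho (w j) (w l))
    (v : EuclideanSpace ℝ (Fin k)) :
    ∑ j, ⟪w j, (WithLp.toLp 2 (fun i => h (v i)) : EuclideanSpace ℝ (Fin k))⟫ ^ 2 ≤
      c ^ 2 * ((m - 1 : ℝ) * Real.cos θ + 1) *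
        (k * h 0 ^ 2 + L ^ 2 * ‖v‖ ^ 2 + 2 * L * |h 0| * Real.sqrt k * ‖v‖) :=
  stmt_10_general c θ L hθ hL h hLip w hwn hang v
end

section
/- Fix K ≥ 2, B > 0 and a label index k' ∈ {1,…,K}. For z ∈ ℝ^K define the cross-entropy loss ℓ(z) = −log(exp(z_{k'}) / Σ_{j=1}^K exp(z_j)). Then for all z, z' ∈ ℝ^K with |z_k| ≤ B and |z'_k| ≤ B for every k, one has |ℓ(z) − ℓ(z')| ≤ ((K−1)/(K−1 + exp(−2B))) Σ_{k=1}^K |z_k − z'_k|. -/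
/-!
Write `ℓ(w) = log ∑ⱼ exp wⱼ - w_{k'}`. Along the segment from `z'` to `z` the derivative of `ℓ`
is `∑ⱼ (pⱼ - δⱼₖ') dⱼ`, where `p` is the softmax of the current point and `d = z - z'`. Every
coefficient satisfies `|pⱼ - δⱼₖ'| ≤ 1 - p_{k'}` because `pⱼ + p_{k'} ≤ 1`, and on the box
`|wⱼ| ≤ B` the mass `1 - p_{k'}` is largest when `w_{k'} = -B` and all other coordinates equal
`B`, which gives `(K-1)/(K-1 + exp(-2B))`. The mean value theorem concludes.
-/

open Real Finset

variable {ι : Type*} [Fintype ι]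

noncomputable def softmax (w : ι → ℝ) (j : ι) : ℝ :=
  exp (w j) / ∑ i, exp (w i)

noncomputable def crossEntropy (w : ι → ℝ) (k : ι) : ℝ :=
  log (∑ j, exp (w j)) - w k

lemma sum_exp_pos [Nonempty ι] (w : ι → ℝ) : 0 < ∑ j, exp (w j) :=
  sum_pos (fun j _ => exp_pos (w j)) univ_nonempty

lemma softmax_nonneg (w : ι → ℝ) (j : ι) : 0 ≤ softmax w j := by
  unfold softmax
  positivity

lemma sum_softmax [Nonempty ι] (w : ι → ℝ) : ∑ j, softmax w j = 1 := by
  simp only [softmax, ← sum_div]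
  exact div_self (sum_exp_pos w).ne'

lemma neg_log_softmax (w : ι → ℝ) (k : ι) : -log (softmax w k) = crossEntropy w k := by
  have : Nonempty ι := ⟨k⟩
  rw [softmax, log_div (exp_ne_zero _) (sum_exp_pos w).ne', log_exp, crossEntropy]
  ring

lemma abs_sum_mul_sub_le_of_sum_eq_one {p : ι → ℝ} (hp : ∀ j, 0 ≤ p j) (hp1 : ∑ j, p j = 1)
    (d : ι → ℝ) (k : ι) : |∑ j, p j * d j - d k| ≤ (1 - p k) * ∑ j, |d j| := by
  classical
  have hcoeff : ∀ j, |p j - (Pi.single k 1 : ι → ℝ) j| ≤ 1 - p k := by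
    intro j
    rcases eq_or_ne j k with rfl | hjk
    · have : p j ≤ 1 := hp1 ▸ single_le_sum (fun i _ => hp i) (mem_univ j)
      rw [Pi.single_eq_same, abs_of_nonpos (by linarith)]
      linarith
    · have : p j + p k ≤ 1 := by
        rw [← hp1, ← sum_pair hjk]
        exact sum_le_sum_of_subset_of_nonneg (subset_univ _) (fun i _ _ => hp i)
      rw [Pi.single_eq_of_ne hjk, sub_zero, abs_of_nonneg (hp j)]
      linarith
  calc |∑ j, p j * d j - d k| = |∑ j, (p j - (Pi.single k 1 : ι → ℝ) j) * d j| := by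
        simp only [sub_mul, sum_sub_distrib, Pi.single_apply, ite_mul, one_mul, zero_mul,
          sum_ite_eq', mem_univ, if_true]
    _ ≤ ∑ j, |p j - (Pi.single k 1 : ι → ℝ) j| * |d j| := by
        simp only [← abs_mul]
        exact abs_sum_le_sum_abs _ _
    _ ≤ ∑ j, (1 - p k) * |d j| := by
        gcongr with j
        exact hcoeff j
    _ = (1 - p k) * ∑ j, |d j| := (mul_sum _ _ _).symm

lemma one_sub_softmax_le {w : ι → ℝ} {B : ℝ} (hw : ∀ j, |w j| ≤ B) (k : ι) :
    1 - softmax w k ≤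
      ((Fintype.card ι : ℝ) - 1) / ((Fintype.card ι : ℝ) - 1 + exp (-2 * B)) := by
  classical
  have : Nonempty ι := ⟨k⟩
  set n : ℝ := (Fintype.card ι : ℝ) - 1
  have hs : 0 < ∑ j, exp (w j) := sum_exp_pos w
  have hn : 0 ≤ n := sub_nonneg.mpr (by exact_mod_cast Fintype.card_pos)
  have hrest : ∑ j, exp (w j) - exp (w k) ≤ n * exp B := by
    rw [← sum_erase_eq_sub (mem_univ k)]
    calc ∑ j ∈ univ.erase k, exp (w j) ≤ #(univ.erase k) • exp B :=
          sum_le_card_nsmul _ _ _ fun j _ => exp_le_exp.mpr (abs_le.mp (hw j)).2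
      _ = n * exp B := by
          rw [nsmul_eq_mul, card_erase_of_mem (mem_univ k), card_univ,
            Nat.cast_sub Fintype.card_pos, Nat.cast_one]
  have hk : exp (-B) ≤ exp (w k) := exp_le_exp.mpr (neg_le_of_abs_le (hw k))
  have hexp : exp B * exp (-2 * B) = exp (-B) := by rw [← exp_add]; ring_nf
  rw [softmax, one_sub_div hs.ne', div_le_div_iff₀ hs (by positivity)]
  -- reduces to `(∑ j, exp (w j) - exp (w k)) * exp (-2B) ≤ n * exp (w k)`
  nlinarith [mul_le_mul_of_nonneg_right hrest (exp_pos (-2 * B)).le,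
    mul_le_mul_of_nonneg_left hk hn]

lemma hasDerivAt_crossEntropy_add_smul (w d : ι → ℝ) (k : ι) (t : ℝ) :
    HasDerivAt (fun t => crossEntropy (w + t • d) k)
      (∑ j, softmax (w + t • d) j * d j - d k) t := by
  have : Nonempty ι := ⟨k⟩
  have hline : ∀ j, HasDerivAt (fun t => w j + t * d j) (d j) t := fun j => by
    simpa using ((hasDerivAt_id t).mul_const (d j)).const_add (w j)
  have hsum : HasDerivAt (fun t => ∑ j, exp (w j + t * d j))
      (∑ j, exp (w j + t * d j) * d j) t :=
    HasDerivAt.fun_sum fun j _ => (hline j).exp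
  have hlog := hsum.log (sum_exp_pos fun j => w j + t * d j).ne'
  refine (hlog.sub (hline k)).congr_deriv ?_
  simp only [softmax, Pi.add_apply, Pi.smul_apply, smul_eq_mul, div_mul_eq_mul_div, ← sum_div]

theorem abs_crossEntropy_sub_le {B : ℝ} {z z' : ι → ℝ} (hz : ∀ j, |z j| ≤ B)
    (hz' : ∀ j, |z' j| ≤ B) (k : ι) :
    |crossEntropy z k - crossEntropy z' k| ≤
      ((Fintype.card ι : ℝ) - 1) / ((Fintype.card ι : ℝ) - 1 + exp (-2 * B)) *
        ∑ j, |z j - z' j| := by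
  have : Nonempty ι := ⟨k⟩
  set C := ((Fintype.card ι : ℝ) - 1) / ((Fintype.card ι : ℝ) - 1 + exp (-2 * B))
  have hbox : ∀ t ∈ Set.Icc (0 : ℝ) 1, ∀ j, |(z' + t • (z - z')) j| ≤ B := fun t ht j =>
    abs_le.mpr ((convex_Icc (-B) B).add_smul_sub_mem (abs_le.mp (hz' j)) (abs_le.mp (hz j)) ht)
  have hderiv : ∀ t ∈ Set.Icc (0 : ℝ) 1,
      ‖∑ j, softmax (z' + t • (z - z')) j * (z - z') j - (z - z') k‖ ≤
        C * ∑ j, |z j - z' j| := fun t ht =>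
    (abs_sum_mul_sub_le_of_sum_eq_one (softmax_nonneg _) (sum_softmax _) _ k).trans
      (mul_le_mul_of_nonneg_right (one_sub_softmax_le (hbox t ht) k)
        (sum_nonneg fun j _ => abs_nonneg _))
  have hmvt := (convex_Icc (0 : ℝ) 1).norm_image_sub_le_of_norm_hasDerivWithin_le
    (fun t _ => (hasDerivAt_crossEntropy_add_smul z' (z - z') k t).hasDerivWithinAt) hderiv
    (Set.left_mem_Icc.mpr zero_le_one) (Set.right_mem_Icc.mpr zero_le_one)
  simpa using hmvt

theorem stmt_15_general (K : ℕ) (B : ℝ) (k' : Fin K)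
    (ℓ : (Fin K → ℝ) → ℝ)
    (hℓ : ∀ z, ℓ z = -Real.log (Real.exp (z k') / ∑ j, Real.exp (z j)))
    (z z' : Fin K → ℝ) (hz : ∀ k, |z k| ≤ B) (hz' : ∀ k, |z' k| ≤ B) :
    |ℓ z - ℓ z'| ≤
      ((K : ℝ) - 1) / ((K : ℝ) - 1 + Real.exp (-2 * B)) * ∑ k, |z k - z' k| := by
  have hℓ' : ∀ w, ℓ w = crossEntropy w k' := fun w => (hℓ w).trans (neg_log_softmax w k')
  simpa only [hℓ', Fintype.card_fin] using abs_crossEntropy_sub_le hz hz' k'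

/-- paper's Lemma 8. The softmax cross-entropy loss
`ℓ(z) = −log(exp(z_{k'}) / Σ_j exp(z_j))`, restricted to score vectors with coordinates
bounded by `B` in absolute value, is Lipschitz in the `ℓ₁` norm with constant
`(K−1)/(K−1 + exp(−2B))`. -/
theorem stmt_15 (K : ℕ) (hK : 2 ≤ K) (B : ℝ) (hB : 0 < B) (k' : Fin K)
    (ℓ : (Fin K → ℝ) → ℝ)
    (hℓ : ∀ z, ℓ z = -Real.log (Real.exp (z k') / ∑ j, Real.exp (z j)))
    (z z' : Fin K → ℝ) (hz : ∀ k, |z k| ≤ B) (hz' : ∀ k, |z' k| ≤ B) :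
    |ℓ z - ℓ z'| ≤
      ((K : ℝ) - 1) / ((K : ℝ) - 1 + Real.exp (-2 * B)) * ∑ k, |z k - z' k| :=
  stmt_15_general K B k' ℓ hℓ z z' hz hz'
end

section
/- Fix d ≥ 2, θ ∈ (0, π/2), and an integer m with m ≤ 2(⌊(π/2 − θ)/θ⌋ + 1). Then for any nonzero vectors w'_1,…,w'_m ∈ ℝ^d there exist nonzero vectors w_1,…,w_m ∈ ℝ^d such that: (i) ρ(w_j, w_k) ≥ θ for all j ≠ k; (ii) ‖w_j‖₂ = ‖w'_j‖₂ for all j; and (iii) arccos(⟨w_j, w'_j⟩/(‖w_j‖₂ ‖w'_j‖₂)) ≤ θ' for all j, where θ' = min(3mθ, π). -/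
/-!
Work in the plane spanned by a unit vector `u` and a unit vector `e ⟂ u`, on the arc
`x ↦ cos x • u + sin x • e`. For an obstacle `v`, the inner product of the arc point with `v` is
`r cos (x - ψ)` with `r ≤ ‖v‖`, so an arc point is `θ`-close (in nonobtuse angle) to `v` only if
`x` lies within `θ` of `ψ + πℤ`. Among the grid points `x = 2θi`, `|i| ≤ K`, spread over an arc
of length at most `2π`, at most three are that close. With `K = ⌊3m/2⌋` there are more than
`3(m - 1)` grid points, so when `3mθ ≤ π` the vectors can be chosen greedily one after another from
the grid around each `w'_j`, at angle at most `2Kθ ≤ 3mθ` from it.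
When `3mθ > π` the bound `θ' = π` is void and the vectors `‖w'_j‖ • (cos (jθ) • u + sin (jθ) • e)`
work, since `mθ ≤ π`.
-/

open RealInnerProductSpace

open Real InnerProductGeometry Module Finset

theorem abs_cos_le_cos_of_le_abs_of_abs_le_pi_sub {θ x : ℝ} (hθ : 0 ≤ θ) (h₁ : θ ≤ |x|)
    (h₂ : |x| ≤ π - θ) : |cos x| ≤ cos θ := by
  rw [← cos_abs x, abs_le]
  constructor
  · have := cos_le_cos_of_nonneg_of_le_pi (abs_nonneg x) (by linarith) h₂
    rwa [cos_pi_sub] at this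
  · exact cos_le_cos_of_nonneg_of_le_pi hθ (by linarith) h₁

theorem abs_sub_round_div_pi_mul_pi_lt {θ y : ℝ} (hθ : 0 ≤ θ) (h : cos θ < |cos y|) :
    |y - round (y / π) * π| < θ := by
  set t := y - round (y / π) * π with ht_def
  have ht : |t| ≤ π / 2 := by
    have ht' : t = (y / π - round (y / π)) * π := by
      rw [ht_def, sub_mul, div_mul_cancel₀ _ pi_ne_zero]
    rw [ht', abs_mul, abs_of_pos pi_pos]
    nlinarith [abs_sub_round (y / π), pi_pos]
  have hcos : |cos y| = cos |t| := by
    rw [cos_abs, ← abs_of_nonneg (cos_nonneg_of_mem_Icc (abs_le.1 ht)), ht_def,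
      cos_sub_int_mul_pi, abs_mul, abs_zpow, abs_neg, abs_one, one_zpow, one_mul]
  by_contra! hle
  linarith [cos_le_cos_of_nonneg_of_le_pi hθ (by linarith [pi_pos]) hle]

theorem exists_abs_cos_mul_add_sin_mul_eq (a b : ℝ) :
    ∃ r ψ : ℝ, 0 ≤ r ∧ r ^ 2 = a ^ 2 + b ^ 2 ∧ |ψ| ≤ π / 2 ∧
      ∀ x, |cos x * a + sin x * b| = r * |cos (x - ψ)| := by
  have key : ∀ a b : ℝ, 0 ≤ a → ∃ r ψ : ℝ, 0 ≤ r ∧ r ^ 2 = a ^ 2 + b ^ 2 ∧ |ψ| ≤ π / 2 ∧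
      ∀ x, cos x * a + sin x * b = r * cos (x - ψ) := by
    intro a b ha
    let z : ℂ := ⟨a, b⟩
    refine ⟨‖z‖, z.arg, norm_nonneg z, ?_, Complex.abs_arg_le_pi_div_two_iff.2 ha, fun x => ?_⟩
    · rw [← Complex.normSq_eq_norm_sq, Complex.normSq_mk]
      ring
    · have hre : ‖z‖ * cos z.arg = a := Complex.norm_mul_cos_arg z
      have him : ‖z‖ * sin z.arg = b := Complex.norm_mul_sin_arg z
      rw [cos_sub]
      linear_combination (-cos x) * hre - sin x * him
  rcases le_total 0 a with ha | ha
  · obtain ⟨r, ψ, hr, hr2, hψ, h⟩ := key a b ha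
    exact ⟨r, ψ, hr, hr2, hψ, fun x => by rw [h, abs_mul, abs_of_nonneg hr]⟩
  · obtain ⟨r, ψ, hr, hr2, hψ, h⟩ := key (-a) (-b) (neg_nonneg.2 ha)
    refine ⟨r, ψ, hr, by rw [hr2]; ring, hψ, fun x => ?_⟩
    rw [← abs_neg, show -(cos x * a + sin x * b) = cos x * -a + sin x * -b by ring, h, abs_mul,
      abs_of_nonneg hr]

theorem card_filter_cos_lt_abs_cos_le_three {θ ψ : ℝ} (hθ₀ : 0 < θ) (hθ : θ < π / 2)
    (hψ : |ψ| ≤ π / 2) {I : Finset ℤ} (hI : ∀ i ∈ I, |2 * θ * i| ≤ π) :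
    #{i ∈ I | cos θ < |cos (2 * θ * ((i : ℤ) : ℝ) - ψ)|} ≤ 3 := by
  let n : ℤ → ℤ := fun i => round ((2 * θ * i - ψ) / π)
  have hn : ∀ i ∈ {i ∈ I | cos θ < |cos (2 * θ * ((i : ℤ) : ℝ) - ψ)|},
      |2 * θ * i - ψ - n i * π| < θ :=
    fun i hi => abs_sub_round_div_pi_mul_pi_lt hθ₀.le (mem_filter.1 hi).2
  -- `n i` labels the multiple of `π` that `2θi - ψ` is within `θ` of; the range of `2θi - ψ`
  -- leaves only the labels `-1, 0, 1`, and two grid points `2θ` apart cannot share a label.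
  calc #{i ∈ I | cos θ < |cos (2 * θ * ((i : ℤ) : ℝ) - ψ)|} ≤ #(Icc (-1 : ℤ) 1) := by
        refine card_le_card_of_injOn n (fun i hi => ?_) (fun i hi j hj hij => ?_)
        · have hni : |(n i : ℝ)| * π < 2 * π := by
            have := abs_sub (2 * θ * i - ψ) (2 * θ * i - ψ - n i * π)
            rw [sub_sub_cancel, abs_mul, abs_of_pos pi_pos] at this
            linarith [hn i hi, hI i (mem_filter.1 hi).1, abs_sub (2 * θ * i) ψ]
          have hni' : |(n i : ℝ)| < 2 := lt_of_mul_lt_mul_right hni pi_pos.le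
          rw [abs_lt] at hni'
          have h₁ : -2 < n i := by exact_mod_cast hni'.1
          have h₂ : n i < 2 := by exact_mod_cast hni'.2
          simp only [coe_Icc, Set.mem_Icc]
          omega
        · have hij' : |(2 * θ) * ((i : ℝ) - j)| < 2 * θ * 1 := by
            have := hn i hi
            rw [show n i = n j from hij] at this
            rw [abs_lt] at this ⊢
            constructor <;> linarith [abs_lt.1 (hn j hj)]
          rw [abs_mul, abs_of_pos (by positivity)] at hij'
          have hij'' : |((i - j : ℤ) : ℝ)| < 1 := by
            push_cast
            exact lt_of_mul_lt_mul_left hij' (by positivity)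
          have : |i - j| < 1 := by exact_mod_cast hij''
          rw [abs_lt] at this
          omega
    _ = 3 := rfl

theorem Finset.exists_mem_forall_not_of_card_filter_le {α ι : Type*} [Fintype ι]
    {s : Finset α} {P : ι → α → Prop} [∀ k, DecidablePred (P k)] {c : ℕ}
    (hP : ∀ k, #{a ∈ s | P k a} ≤ c) (hs : Fintype.card ι * c < #s) :
    ∃ a ∈ s, ∀ k, ¬ P k a := by
  classical
  by_contra! h
  have hsub : s ⊆ univ.biUnion fun k => {a ∈ s | P k a} := fun a ha => by
    obtain ⟨k, hk⟩ := h a ha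
    exact mem_biUnion.2 ⟨k, mem_univ k, mem_filter.2 ⟨ha, hk⟩⟩
  have := (card_le_card hsub).trans <|
    card_biUnion_le.trans (sum_le_card_nsmul _ _ c fun k _ => hP k)
  simp only [card_univ, smul_eq_mul] at this
  omega

theorem exists_pairwise_of_forall_exists {β : Type*} {R : β → β → Prop}
    (hR : ∀ a b, R a b → R b a) {m : ℕ} {Q : Fin m → β → Prop}
    (h : ∀ j : Fin m, ∀ v : Fin j → β, ∃ b, Q j b ∧ ∀ k, R b (v k)) :
    ∃ w : Fin m → β, (∀ j, Q j (w j)) ∧ Pairwise fun j k => R (w j) (w k) := by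
  induction m with
  | zero => exact ⟨Fin.elim0, fun j => j.elim0, fun j => j.elim0⟩
  | succ m ih =>
    obtain ⟨w, hQ, hw⟩ := ih (Q := fun j => Q j.castSucc) fun j => h j.castSucc
    obtain ⟨b, hb, hbw⟩ := h (Fin.last m) w
    refine ⟨Fin.snoc w b, Fin.lastCases (by simpa) (fun j => by simpa using hQ j), ?_⟩
    intro j k hjk
    induction j using Fin.lastCases <;> induction k using Fin.lastCases
    · exact absurd rfl hjk
    · simpa using hbw _
    · simpa using hR _ _ (hbw _)
    · simpa using hw (fun h => hjk (congrArg _ h))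

variable {E : Type*} [NormedAddCommGroup E] [InnerProductSpace ℝ E]

theorem rho_comm (u v : E) : rho u v = rho v u := by
  simp only [rho, real_inner_comm v u, mul_comm ‖u‖]

theorem rho_smul_left {a : ℝ} (ha : a ≠ 0) (u v : E) : rho (a • u) v = rho u v := by
  simp only [rho, real_inner_smul_left, norm_smul, Real.norm_eq_abs, abs_mul, mul_assoc]
  rw [mul_div_mul_left _ _ (abs_ne_zero.2 ha)]

theorem le_rho_of_abs_inner_le {θ : ℝ} (hθ₀ : 0 ≤ θ) (hθ : θ ≤ π / 2) {u v : E}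
    (h : |⟪u, v⟫| ≤ cos θ * (‖u‖ * ‖v‖)) : θ ≤ rho u v := by
  calc θ = arccos (cos θ) := (arccos_cos hθ₀ (by linarith [pi_pos])).symm
    _ ≤ rho u v := arccos_le_arccos <|
      div_le_of_le_mul₀ (by positivity) (cos_nonneg_of_mem_Icc ⟨by linarith, hθ⟩) h

theorem exists_norm_eq_one_inner_eq_zero (hE : 2 ≤ finrank ℝ E) (u : E) :
    ∃ e : E, ‖e‖ = 1 ∧ ⟪u, e⟫ = 0 := by
  have : FiniteDimensional ℝ E := finite_of_finrank_pos (by omega)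
  have hdim := (ℝ ∙ u).finrank_add_finrank_orthogonal
  have : finrank ℝ (ℝ ∙ u) ≤ 1 := by simpa using finrank_span_le_card (R := ℝ) {u}
  have : Nontrivial (ℝ ∙ u)ᗮ := nontrivial_of_finrank_pos (R := ℝ) (by omega)
  obtain ⟨⟨x, hx⟩, hx0⟩ := exists_ne (0 : (ℝ ∙ u)ᗮ)
  have hx0 : x ≠ 0 := fun h => hx0 (by simp [h])
  refine ⟨(‖x‖⁻¹ : ℝ) • x, norm_smul_inv_norm hx0, ?_⟩
  rw [real_inner_smul_right, Submodule.mem_orthogonal_singleton_iff_inner_right.1 hx, mul_zero]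

noncomputable def circleVec (e f : E) (x : ℝ) : E := cos x • e + sin x • f

theorem inner_circleVec_left (e f : E) (x : ℝ) (v : E) :
    ⟪circleVec e f x, v⟫ = cos x * ⟪e, v⟫ + sin x * ⟪f, v⟫ := by
  rw [circleVec, inner_add_left, real_inner_smul_left, real_inner_smul_left]

section Orthonormal

variable {e f : E} (he : ‖e‖ = 1) (hf : ‖f‖ = 1) (hef : ⟪e, f⟫ = 0)
include he hf hef

theorem inner_circleVec_circleVec (x y : ℝ) :
    ⟪circleVec e f x, circleVec e f y⟫ = cos (x - y) := by
  have hee : ⟪e, e⟫ = 1 := by rw [real_inner_self_eq_norm_sq, he, one_pow]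
  have hff : ⟪f, f⟫ = 1 := by rw [real_inner_self_eq_norm_sq, hf, one_pow]
  rw [inner_circleVec_left, circleVec, inner_add_right, inner_add_right, real_inner_smul_right,
    real_inner_smul_right, real_inner_smul_right, real_inner_smul_right, real_inner_comm e f,
    hee, hff, hef, cos_sub]
  ring

theorem norm_circleVec (x : ℝ) : ‖circleVec e f x‖ = 1 := by
  have h := inner_circleVec_circleVec he hf hef x x
  rwa [sub_self, cos_zero, real_inner_self_eq_norm_sq, pow_eq_one_iff_of_nonneg (norm_nonneg _)
    two_ne_zero] at h

theorem angle_circleVec_left {x : ℝ} (hx : |x| ≤ π) : angle (circleVec e f x) e = |x| := by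
  have h : ⟪circleVec e f x, e⟫ = cos x := by
    rw [inner_circleVec_left, real_inner_self_eq_norm_sq, he, real_inner_comm, hef]
    ring
  rw [angle, h, he, norm_circleVec he hf hef, mul_one, div_one, ← cos_abs,
    arccos_cos (abs_nonneg x) hx]

theorem inner_sq_add_inner_sq_le (v : E) : ⟪e, v⟫ ^ 2 + ⟪f, v⟫ ^ 2 ≤ ‖v‖ ^ 2 := by
  have hon : Orthonormal ℝ ![e, f] := by
    rw [orthonormal_iff_ite]
    intro i j
    fin_cases i <;> fin_cases j <;> simp [he, hf, hef, real_inner_comm e f]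
  simpa [Fin.sum_univ_two] using hon.sum_inner_products_le v (s := univ)

theorem card_filter_lt_abs_inner_circleVec_le_three {θ : ℝ} (hθ₀ : 0 < θ) (hθ : θ < π / 2)
    {I : Finset ℤ} (hI : ∀ i ∈ I, |2 * θ * i| ≤ π) (v : E) :
    #{i ∈ I | cos θ * ‖v‖ < |⟪circleVec e f (2 * θ * ((i : ℤ) : ℝ)), v⟫|} ≤ 3 := by
  obtain ⟨r, ψ, hr, hr2, hψ, hphase⟩ := exists_abs_cos_mul_add_sin_mul_eq ⟪e, v⟫ ⟪f, v⟫
  have hrv : r ≤ ‖v‖ :=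
    (pow_le_pow_iff_left₀ hr (norm_nonneg v) two_ne_zero).1
      (hr2 ▸ inner_sq_add_inner_sq_le he hf hef v)
  refine (card_le_card fun i hi => ?_).trans (card_filter_cos_lt_abs_cos_le_three hθ₀ hθ hψ hI)
  rw [mem_filter, inner_circleVec_left, hphase] at hi
  refine mem_filter.2 ⟨hi.1, ?_⟩
  by_contra! hc
  nlinarith [mul_le_mul_of_nonneg_right hrv (abs_nonneg (cos (2 * θ * i - ψ))),
    mul_le_mul_of_nonneg_left hc (norm_nonneg v)]

end Orthonormal

theorem exists_norm_eq_angle_le_forall_le_rho (hE : 2 ≤ finrank ℝ E) {θ : ℝ} (hθ₀ : 0 < θ)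
    (hθ : θ < π / 2) {n K : ℕ} (hnK : 3 * n < 2 * K + 1) (hK : 2 * K * θ ≤ π) {u : E}
    (hu : u ≠ 0) (v : Fin n → E) :
    ∃ w : E, ‖w‖ = ‖u‖ ∧ angle w u ≤ 2 * K * θ ∧ ∀ k, θ ≤ rho w (v k) := by
  have hu₀ : 0 < ‖u‖ := norm_pos_iff.2 hu
  let û : E := (‖u‖⁻¹ : ℝ) • u
  have hû : ‖û‖ = 1 := norm_smul_inv_norm hu
  obtain ⟨e, he, hûe⟩ := exists_norm_eq_one_inner_eq_zero hE û
  let I : Finset ℤ := Icc (-K : ℤ) K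
  have hI : ∀ i ∈ I, |2 * θ * i| ≤ 2 * K * θ := fun i hi => by
    have hi' : |(i : ℝ)| ≤ K := by
      rw [abs_le]
      exact_mod_cast mem_Icc.1 hi
    rw [abs_mul, abs_of_pos (by positivity)]
    nlinarith
  obtain ⟨i, hiI, hi⟩ := exists_mem_forall_not_of_card_filter_le (s := I) (c := 3)
    (fun k => card_filter_lt_abs_inner_circleVec_le_three hû he hûe hθ₀ hθ
      (fun i hi => (hI i hi).trans hK) (v k))
    (by simp only [Fintype.card_fin, I, Int.card_Icc]; omega)
  refine ⟨‖u‖ • circleVec û e (2 * θ * i), ?_, ?_, fun k => ?_⟩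
  · rw [norm_smul, norm_circleVec hû he hûe, norm_norm, mul_one]
  · have : angle (circleVec û e (2 * θ * i)) u = |2 * θ * i| := by
      rw [← angle_smul_right_of_pos _ u (inv_pos.2 hu₀)]
      exact angle_circleVec_left hû he hûe ((hI i hiI).trans hK)
    rw [angle_smul_left_of_pos _ _ hu₀, this]
    exact hI i hiI
  · rw [rho_smul_left hu₀.ne']
    refine le_rho_of_abs_inner_le hθ₀.le hθ.le ?_
    rw [norm_circleVec hû he hûe, one_mul]
    exact not_lt.1 (hi k)

theorem exists_pairwise_le_rho_of_mul_le_pi (hE : 2 ≤ finrank ℝ E) {θ : ℝ} (hθ₀ : 0 ≤ θ)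
    (hθ : θ ≤ π / 2) {m : ℕ} (hm : m * θ ≤ π) (r : Fin m → ℝ) (hr : ∀ j, 0 < r j) :
    ∃ w : Fin m → E, (∀ j, ‖w j‖ = r j) ∧ Pairwise fun j k => θ ≤ rho (w j) (w k) := by
  have : Nontrivial E := nontrivial_of_finrank_pos (R := ℝ) (by omega)
  obtain ⟨e, he⟩ := exists_norm_eq E zero_le_one
  obtain ⟨f, hf, hef⟩ := exists_norm_eq_one_inner_eq_zero hE e
  refine ⟨fun j => r j • circleVec e f (j * θ), fun j => ?_, fun j k hjk => ?_⟩
  · rw [norm_smul, norm_circleVec he hf hef, mul_one, norm_of_nonneg (hr j).le]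
  dsimp only
  rw [rho_smul_left (hr j).ne', rho_comm, rho_smul_left (hr k).ne', rho_comm]
  refine le_rho_of_abs_inner_le hθ₀ hθ ?_
  rw [inner_circleVec_circleVec he hf hef, norm_circleVec he hf hef, norm_circleVec he hf hef,
    mul_one, mul_one, ← sub_mul]
  have h₁ : (1 : ℝ) ≤ |(j : ℝ) - k| := by
    have : (1 : ℤ) ≤ |(j : ℤ) - k| := Int.one_le_abs (sub_ne_zero.2 (by omega))
    exact_mod_cast this
  have h₂ : |(j : ℝ) - k| ≤ m - 1 := by
    have hj : (j : ℝ) + 1 ≤ m := by exact_mod_cast j.2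
    have hk : (k : ℝ) + 1 ≤ m := by exact_mod_cast k.2
    rw [abs_sub_le_iff]
    constructor <;> linarith [Nat.cast_nonneg (α := ℝ) j, Nat.cast_nonneg (α := ℝ) k]
  apply abs_cos_le_cos_of_le_abs_of_abs_le_pi_sub hθ₀ <;> rw [abs_mul, abs_of_nonneg hθ₀] <;>
    nlinarith

theorem natCast_mul_le_pi_of_le_two_mul_floor {θ : ℝ} (hθ₀ : 0 < θ) (hθ : θ ≤ π / 2) {m : ℕ}
    (hm : m ≤ 2 * (⌊(π / 2 - θ) / θ⌋₊ + 1)) : (m : ℝ) * θ ≤ π := by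
  have hfloor := Nat.floor_le (div_nonneg (by linarith) hθ₀.le : 0 ≤ (π / 2 - θ) / θ)
  have hm' : (m : ℝ) ≤ 2 * ((π / 2 - θ) / θ + 1) :=
    calc (m : ℝ) ≤ 2 * (⌊(π / 2 - θ) / θ⌋₊ + 1) := by exact_mod_cast hm
      _ ≤ 2 * ((π / 2 - θ) / θ + 1) := by linarith
  calc (m : ℝ) * θ ≤ 2 * ((π / 2 - θ) / θ + 1) * θ := by gcongr
    _ = π := by field_simp; ring

/-- paper's Lemma 10. For `θ ∈ (0, π/2)` and
`m ≤ 2(⌊(π/2 − θ)/θ⌋ + 1)`, any nonzero vectors `w'_1,…,w'_m ∈ ℝ^d` (`d ≥ 2`) can be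
perturbed to nonzero vectors `w_1,…,w_m` with pairwise nonobtuse angles at least `θ`,
the same norms, and ordinary angle at most `θ' = min(3mθ, π)` to the original vectors. -/
theorem stmt_17 {d : ℕ} (hd : 2 ≤ d) (θ : ℝ) (hθ : θ ∈ Set.Ioo 0 (Real.pi / 2))
    (m : ℕ) (hm : m ≤ 2 * (Nat.floor ((Real.pi / 2 - θ) / θ) + 1))
    (w' : Fin m → EuclideanSpace ℝ (Fin d)) (hw' : ∀ j, w' j ≠ 0) :
    ∃ w : Fin m → EuclideanSpace ℝ (Fin d),
      (∀ j, w j ≠ 0) ∧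
      (∀ j k, j ≠ k → θ ≤ rho (w j) (w k)) ∧
      (∀ j, ‖w j‖ = ‖w' j‖) ∧
      (∀ j, Real.arccos (⟪w j, w' j⟫ / (‖w j‖ * ‖w' j‖)) ≤ min (3 * m * θ) Real.pi) := by
  obtain ⟨hθ₀, hθ⟩ := hθ
  have hE : 2 ≤ finrank ℝ (EuclideanSpace ℝ (Fin d)) := by rwa [finrank_euclideanSpace_fin]
  have hw'₀ : ∀ j, 0 < ‖w' j‖ := fun j => norm_pos_iff.2 (hw' j)
  rcases le_or_gt (3 * m * θ) π with hsmall | hlarge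
  · obtain ⟨w, hw, hpair⟩ := exists_pairwise_of_forall_exists (R := fun a b => θ ≤ rho a b)
      (fun a b h => (rho_comm b a).trans_ge h)
      (Q := fun j b => ‖b‖ = ‖w' j‖ ∧ angle b (w' j) ≤ 3 * m * θ) fun j v => by
        have h2K : ((2 * (3 * m / 2) : ℕ) : ℝ) ≤ 3 * m := by
          exact_mod_cast Nat.mul_div_le (3 * m) 2
        obtain ⟨b, hb, hangle, hbv⟩ := exists_norm_eq_angle_le_forall_le_rho hE hθ₀ hθ
          (K := 3 * m / 2) (by omega) (by push_cast at h2K; nlinarith) (hw' j) v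
        exact ⟨b, ⟨hb, hangle.trans (by push_cast at h2K; nlinarith)⟩, hbv⟩
    exact ⟨w, fun j => norm_pos_iff.1 ((hw j).1 ▸ hw'₀ j), hpair, fun j => (hw j).1,
      fun j => le_min (hw j).2 (angle_le_pi _ _)⟩
  · obtain ⟨w, hw, hpair⟩ := exists_pairwise_le_rho_of_mul_le_pi hE hθ₀.le hθ.le
      (natCast_mul_le_pi_of_le_two_mul_floor hθ₀ hθ.le hm) _ hw'₀
    exact ⟨w, fun j => norm_pos_iff.1 ((hw j) ▸ hw'₀ j), hpair, hw,
      fun j => le_min ((angle_le_pi _ _).trans hlarge.le) (angle_le_pi _ _)⟩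
end
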